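/- arXiv:math/0410532 — 8 statements merged into one kernel-verified Lean document; each statement's English description precedes it below -/
import Mathlib

section
/- Let 0 < α < 1 and let w : ℕ → (0,∞) satisfy w(k) = k^α + v(k) where v(k) = o(k^α) as k → ∞. Then for every λ > 0 the series ∑_{k=1}^∞ ∏_{j=0}^{k−1} w(j)/(λ + w(j)) converges. -/
open Filter Asymptotics Finset Real

/-!
Write `w j / (λ + w j) = 1 - a j` with `a j = λ / (λ + w j)`. Since `1 - x ≤ exp (-x)`, the `k`-th
term is at most `exp (-∑_{j ≤ k} a j)`. As `w j = O(j^α)`, we have `a j ≥ c j^{-α}`, so these partial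
sums grow at least like `k^{1-α}`, and `exp (-c k^{1-α})` is summable because `1 - α > 0`.
-/

theorem prod_one_sub_le_exp_neg_sum {ι : Type*} (s : Finset ι) {a : ι → ℝ}
    (ha : ∀ i ∈ s, a i ≤ 1) : ∏ i ∈ s, (1 - a i) ≤ exp (-∑ i ∈ s, a i) := by
  rw [← sum_neg_distrib, exp_sum]
  exact prod_le_prod (fun i hi => sub_nonneg.2 (ha i hi)) fun i _ => one_sub_le_exp_neg (a i)

theorem summable_exp_neg_mul_natCast_rpow {c β : ℝ} (hc : 0 < c) (hβ : 0 < β) :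
    Summable fun k : ℕ => exp (-c * (k : ℝ) ^ β) := by
  have hpow : Tendsto (fun k : ℕ => (k : ℝ) ^ β) atTop atTop :=
    (tendsto_rpow_atTop hβ).comp tendsto_natCast_atTop_atTop
  have hlo := (isLittleO_exp_neg_mul_rpow_atTop hc (-2 / β)).comp_tendsto hpow
  refine summable_of_isBigO_nat (summable_nat_rpow.2 (by norm_num : (-2 : ℝ) < -1))
    (hlo.isBigO.congr_right fun k => ?_)
  rw [Function.comp_apply, ← rpow_mul k.cast_nonneg, mul_div_cancel₀ _ hβ.ne']

theorem eventually_mul_rpow_le_sum_range {α c : ℝ} (hα : 0 ≤ α) (hc : 0 < c) {a : ℕ → ℝ}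
    (ha : ∀ j, 0 ≤ a j) (hca : ∀ᶠ j : ℕ in atTop, c * (j : ℝ) ^ (-α) ≤ a j) :
    ∀ᶠ k : ℕ in atTop, c / 2 * (k : ℝ) ^ (1 - α) ≤ ∑ j ∈ range (k + 1), a j := by
  obtain ⟨N, hN⟩ := eventually_atTop.1 (hca.and (eventually_ge_atTop 1))
  filter_upwards [eventually_ge_atTop (2 * N), eventually_ge_atTop 1] with k hk hk1
  have hkpos : (0 : ℝ) < k := by exact_mod_cast hk1
  have hterm : ∀ j ∈ Ico N (k + 1), c * (k : ℝ) ^ (-α) ≤ a j := fun j hj => by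
    obtain ⟨hNj, hjk⟩ := mem_Ico.1 hj
    obtain ⟨hcj, hj1⟩ := hN j hNj
    refine le_trans (mul_le_mul_of_nonneg_left ?_ hc.le) hcj
    exact rpow_le_rpow_of_nonpos (Nat.cast_pos.2 hj1) (Nat.cast_le.2 (Nat.lt_succ_iff.1 hjk))
      (neg_nonpos.2 hα)
  have hcard : (k : ℝ) / 2 ≤ #(Ico N (k + 1)) := by
    rw [Nat.card_Ico, Nat.cast_sub (by omega)]
    have : (2 * N : ℝ) ≤ k := by exact_mod_cast hk
    push_cast
    linarith
  calc c / 2 * (k : ℝ) ^ (1 - α) = (k : ℝ) / 2 * (c * (k : ℝ) ^ (-α)) := by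
        rw [sub_eq_add_neg, rpow_add hkpos, rpow_one]; ring
    _ ≤ #(Ico N (k + 1)) * (c * (k : ℝ) ^ (-α)) := by gcongr
    _ ≤ ∑ j ∈ Ico N (k + 1), a j := by
        rw [← nsmul_eq_mul]; exact card_nsmul_le_sum _ _ _ hterm
    _ ≤ ∑ j ∈ range (k + 1), a j :=
        sum_le_sum_of_subset_of_nonneg (fun j hj => by simp at hj ⊢; omega) fun j _ _ => ha j

theorem eventually_mul_rpow_neg_le_div_add {α lam : ℝ} (hα : 0 ≤ α) (hlam : 0 < lam)
    {w : ℕ → ℝ} (hw : ∀ k, 0 < w k) (hwO : w =O[atTop] fun k : ℕ => (k : ℝ) ^ α) :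
    ∃ c > 0, ∀ᶠ j : ℕ in atTop, c * (j : ℝ) ^ (-α) ≤ lam / (lam + w j) := by
  obtain ⟨C, hC, hCw⟩ := hwO.exists_pos
  refine ⟨lam / (lam + C), by positivity, ?_⟩
  filter_upwards [hCw.bound, eventually_ge_atTop 1] with j hj hj1
  have hj1' : (1 : ℝ) ≤ j := by exact_mod_cast hj1
  have hpow : 1 ≤ (j : ℝ) ^ α := one_le_rpow hj1' hα
  rw [norm_of_nonneg (hw j).le, norm_of_nonneg (by positivity)] at hj
  have hwj := hw j
  rw [rpow_neg (by positivity), ← div_eq_mul_inv, div_div]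
  gcongr
  nlinarith

theorem summable_prod_div_add_of_isBigO_rpow {α lam : ℝ} (hα0 : 0 ≤ α) (hα1 : α < 1)
    (hlam : 0 < lam) {w : ℕ → ℝ} (hw : ∀ k, 0 < w k)
    (hwO : w =O[atTop] fun k : ℕ => (k : ℝ) ^ α) :
    Summable fun k : ℕ => ∏ j ∈ range (k + 1), w j / (lam + w j) := by
  have hsplit : ∀ j, w j / (lam + w j) = 1 - lam / (lam + w j) := fun j => by
    rw [one_sub_div (add_pos hlam (hw j)).ne', add_sub_cancel_left]
  have hpos : ∀ j, 0 < lam / (lam + w j) := fun j => div_pos hlam (add_pos hlam (hw j))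
  have hle : ∀ j, lam / (lam + w j) ≤ 1 := fun j =>
    div_le_one_of_le₀ (le_add_of_nonneg_right (hw j).le) (add_pos hlam (hw j)).le
  obtain ⟨c, hc, hca⟩ := eventually_mul_rpow_neg_le_div_add hα0 hlam hw hwO
  have hsum := eventually_mul_rpow_le_sum_range hα0 hc (fun j => (hpos j).le) hca
  refine Summable.of_norm_bounded_eventually_nat
    (summable_exp_neg_mul_natCast_rpow (half_pos hc) (sub_pos.2 hα1)) ?_
  filter_upwards [hsum] with k hk
  simp_rw [hsplit]
  rw [norm_of_nonneg (prod_nonneg fun j _ => sub_nonneg.2 (hle j))]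
  calc ∏ j ∈ range (k + 1), (1 - lam / (lam + w j))
      ≤ exp (-∑ j ∈ range (k + 1), lam / (lam + w j)) :=
        prod_one_sub_le_exp_neg_sum _ fun j _ => hle j
    _ ≤ exp (-(c / 2) * (k : ℝ) ^ (1 - α)) := by gcongr; linarith

/-- If `w k = k^α + v k` with `0 < α < 1` and `v k = o(k^α)`, then for every
`λ > 0` the series `∑_{k=1}^∞ ∏_{j=0}^{k-1} w j / (λ + w j)` converges. -/
theorem statement2
    (α : ℝ) (hα0 : 0 < α) (hα1 : α < 1)
    (w v : ℕ → ℝ) (hw : ∀ k, 0 < w k)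
    (hwv : ∀ k, w k = (k : ℝ) ^ α + v k)
    (hv : v =o[atTop] fun k : ℕ => (k : ℝ) ^ α)
    (lam : ℝ) (hlam : 0 < lam) :
    Summable (fun k : ℕ => ∏ j ∈ Finset.range (k + 1), w j / (lam + w j)) := by
  have hwO : w =O[atTop] fun k : ℕ => (k : ℝ) ^ α := by
    rw [show w = fun k : ℕ => (k : ℝ) ^ α + v k from funext hwv]
    exact (isBigO_refl _ _).add hv.isBigO
  exact summable_prod_div_add_of_isBigO_rpow hα0.le hα1 hlam hw hwO
end

section
/- Let w : ℕ → (0,∞) satisfy w(k) = k + v(k) where v(k) = o(k) as k → ∞ and the series ∑_{k≥1} v(k)/k² converges. Then the series ρ̂(λ) := ∑_{k=1}^∞ ∏_{j=0}^{k−1} w(j)/(λ + w(j)) converges for every λ > 1 and diverges for every λ with 0 < λ ≤ 1. -/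
/-!
For `j ≥ 1` split each factor as `w j / (λ + w j) = j / (λ + j) * (1 + s j)` with
`s j = λ v j / (j (λ + w j)) = O(v j / j²)`. By Gauss's product formula for `Γ`,
`∏_{j=1}^n j / (λ + j) ~ λ Γ(λ) n^(-λ)`, while `∏ (1 + s j)` converges to a nonzero limit because
`∑ s j` converges absolutely. So the `n`-th term of `ρ̂(λ)` is `Θ(n^(-λ))`, and the series
converges exactly when `λ > 1`.
-/

open Filter Asymptotics Topology Finset

theorem prod_div_add_mul_rpow_eq_GammaSeq {lam : ℝ} (hlam : 0 < lam) {n : ℕ} (hn : n ≠ 0) :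
    (∏ i ∈ range n, ((i : ℝ) + 1) / (lam + ((i : ℝ) + 1))) * (n : ℝ) ^ lam
      = lam * Real.GammaSeq lam n := by
  have hden : ∏ j ∈ range (n + 1), (lam + j) = lam * ∏ i ∈ range n, (lam + ((i : ℝ) + 1)) := by
    rw [prod_range_succ']; push_cast; ring
  have hfact : ∏ i ∈ range n, ((i : ℝ) + 1) = n.factorial := by
    rw [← prod_range_add_one_eq_factorial]; push_cast; rfl
  have hden_ne : ∏ i ∈ range n, (lam + ((i : ℝ) + 1)) ≠ 0 :=
    prod_ne_zero_iff.2 fun i _ => by positivity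
  rw [Real.GammaSeq, hden, prod_div_distrib, hfact]
  field_simp

theorem tendsto_prod_div_add_mul_rpow {lam : ℝ} (hlam : 0 < lam) :
    Tendsto (fun n : ℕ => (∏ i ∈ range n, ((i : ℝ) + 1) / (lam + ((i : ℝ) + 1))) * (n : ℝ) ^ lam)
      atTop (𝓝 (lam * Real.Gamma lam)) :=
  ((Real.GammaSeq_tendsto_Gamma lam).const_mul lam).congr'
    ((eventually_ne_atTop 0).mono fun _ hn => (prod_div_add_mul_rpow_eq_GammaSeq hlam hn).symm)

section Weight

variable {w v : ℕ → ℝ}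

theorem tendsto_natCast_div_const_add (hwv : ∀ k, w k = k + v k)
    (hv : v =o[atTop] fun k : ℕ => (k : ℝ)) (lam : ℝ) :
    Tendsto (fun k : ℕ => (k : ℝ) / (lam + w k)) atTop (𝓝 1) := by
  have h : Tendsto (fun k : ℕ => lam / k + 1 + v k / k) atTop (𝓝 (0 + 1 + 0)) :=
    ((tendsto_const_div_atTop_nhds_zero_nat lam).add_const 1).add hv.tendsto_div_nhds_zero
  rw [zero_add, add_zero] at h
  have h' : Tendsto (fun k : ℕ => (lam + w k) / k) atTop (𝓝 1) := by
    refine h.congr' ((eventually_ne_atTop 0).mono fun k hk => ?_)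
    simp only [hwv]
    field_simp
    ring
  simpa only [inv_div, inv_one] using h'.inv₀ one_ne_zero

theorem summable_mul_div_mul_const_add (hwv : ∀ k, w k = k + v k)
    (hv : v =o[atTop] fun k : ℕ => (k : ℝ)) (hvsum : Summable fun k : ℕ => v k / (k : ℝ) ^ 2)
    (lam : ℝ) : Summable fun k : ℕ => lam * v k / (k * (lam + w k)) := by
  refine summable_of_isBigO_nat' hvsum ?_
  have h := (((isBigO_refl (fun k : ℕ => v k / (k : ℝ) ^ 2) atTop).const_mul_left lam).mul
    ((tendsto_natCast_div_const_add hwv hv lam).isBigO_one ℝ))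
  simp only [mul_one] at h
  refine h.congr' ((eventually_ne_atTop 0).mono fun k hk => ?_) EventuallyEq.rfl
  have : (k : ℝ) ≠ 0 := Nat.cast_ne_zero.2 hk
  field_simp

theorem exists_tendsto_prod_div_const_add_mul_rpow (hw : ∀ k, 0 < w k) (hwv : ∀ k, w k = k + v k)
    (hv : v =o[atTop] fun k : ℕ => (k : ℝ)) (hvsum : Summable fun k : ℕ => v k / (k : ℝ) ^ 2)
    {lam : ℝ} (hlam : 0 < lam) :
    ∃ c ≠ 0, Tendsto (fun n : ℕ => (∏ j ∈ range (n + 1), w j / (lam + w j)) * (n : ℝ) ^ lam)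
      atTop (𝓝 c) := by
  set s : ℕ → ℝ := fun i => lam * v (i + 1) / ((i + 1 : ℕ) * (lam + w (i + 1))) with hs_def
  have hs : Summable s :=
    (summable_nat_add_iff 1).2 (summable_mul_div_mul_const_add hwv hv hvsum lam)
  have hfactor : ∀ i : ℕ, w (i + 1) / (lam + w (i + 1))
      = ((i : ℝ) + 1) / (lam + ((i : ℝ) + 1)) * (1 + s i) := by
    intro i
    have hwi := hw (i + 1)
    rw [hwv] at hwi
    simp only [hs_def, hwv (i + 1)]
    push_cast at hwi ⊢
    have hq : (0 : ℝ) < lam + ((i : ℝ) + 1) := by positivity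
    have ht : (0 : ℝ) < lam + ((i : ℝ) + 1 + v (i + 1)) := by linarith
    field_simp
    ring
  have hne : ∀ i, 1 + s i ≠ 0 := fun i h => by
    have := hfactor i
    rw [h, mul_zero] at this
    exact (div_pos (hw (i + 1)) (by linarith [hw (i + 1)])).ne' this
  refine ⟨w 0 / (lam + w 0) * (lam * Real.Gamma lam) * ∏' i, (1 + s i), ?_, ?_⟩
  · have hw0 := hw 0
    exact mul_ne_zero (mul_ne_zero (by positivity) (by positivity [Real.Gamma_pos_of_pos hlam]))
      (tprod_one_add_ne_zero_of_summable hne hs.norm)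
  have hprod : ∀ n : ℕ, (∏ j ∈ range (n + 1), w j / (lam + w j)) * (n : ℝ) ^ lam
      = w 0 / (lam + w 0) * ((∏ i ∈ range n, ((i : ℝ) + 1) / (lam + ((i : ℝ) + 1))) * (n : ℝ) ^ lam)
        * ∏ i ∈ range n, (1 + s i) := by
    intro n
    rw [prod_range_succ', prod_congr rfl fun i _ => hfactor i, prod_mul_distrib]
    ring
  simp only [hprod]
  exact (tendsto_const_nhds.mul (tendsto_prod_div_add_mul_rpow hlam)).mul
    (Real.multipliable_one_add_of_summable hs).hasProd.tendsto_prod_nat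

theorem isTheta_prod_div_const_add_rpow_neg (hw : ∀ k, 0 < w k) (hwv : ∀ k, w k = k + v k)
    (hv : v =o[atTop] fun k : ℕ => (k : ℝ)) (hvsum : Summable fun k : ℕ => v k / (k : ℝ) ^ 2)
    {lam : ℝ} (hlam : 0 < lam) :
    (fun n : ℕ => ∏ j ∈ range (n + 1), w j / (lam + w j)) =Θ[atTop] fun n => (n : ℝ) ^ (-lam) := by
  obtain ⟨c, hc, h⟩ := exists_tendsto_prod_div_const_add_mul_rpow hw hwv hv hvsum hlam
  refine (isTheta_of_div_tendsto_nhds_ne_zero ?_ hc).symm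
  simpa only [Real.rpow_neg (Nat.cast_nonneg _), div_inv_eq_mul] using h

end Weight

/-- If `w k = k + v k` with `v k = o(k)` and `∑ v k / k²` convergent, then the
series `ρ̂(λ) = ∑_{k=1}^∞ ∏_{j=0}^{k-1} w j / (λ + w j)` converges for every `λ > 1` and
diverges for every `0 < λ ≤ 1`. -/
theorem statement3
    (w v : ℕ → ℝ) (hw : ∀ k, 0 < w k)
    (hwv : ∀ k, w k = (k : ℝ) + v k)
    (hv : v =o[atTop] fun k : ℕ => (k : ℝ))
    (hvsum : Summable (fun k : ℕ => v k / (k : ℝ) ^ 2)) :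
    (∀ lam : ℝ, 1 < lam →
      Summable (fun k : ℕ => ∏ j ∈ Finset.range (k + 1), w j / (lam + w j))) ∧
    (∀ lam : ℝ, 0 < lam → lam ≤ 1 →
      ¬ Summable (fun k : ℕ => ∏ j ∈ Finset.range (k + 1), w j / (lam + w j))) := by
  have key : ∀ lam : ℝ, 0 < lam →
      (Summable (fun k : ℕ => ∏ j ∈ Finset.range (k + 1), w j / (lam + w j)) ↔ 1 < lam) :=
    fun lam hlam =>
      (isTheta_prod_div_const_add_rpow_neg hw hwv hv hvsum hlam).summable_iff_nat.trans
        (Real.summable_nat_rpow.trans neg_lt_neg_iff)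
  exact ⟨fun lam hlam => (key lam (by linarith)).2 hlam,
    fun lam hlam hlam1 => by rw [key lam hlam]; exact not_lt.2 hlam1⟩
end

section
/- Let w : ℕ → (0,∞) with w(0)=1 satisfy either (a) w(k) = k + v(k) with v(k) = o(k) and ∑_{k≥1} v(k)/k² convergent, or (b) w(k) = k^α + v(k) with 0 < α < 1 and v(k) = o(k^α). Then there exists a unique λ* > 0 such that ∑_{k=1}^∞ ∏_{j=0}^{k−1} w(j)/(λ* + w(j)) = 1; moreover in case (a) one has λ* > 1. (Uniqueness holds because λ ↦ ∑_{k=1}^∞ ∏_{j=0}^{k−1} w(j)/(λ+w(j)) is strictly decreasing on the set where it is finite and tends to 0 as λ → ∞.) -/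
/-!
Write `F(λ) = ∑ₖ ∏_{j ≤ k} w j / (λ + w j)`. Every term is positive, continuous and strictly
decreasing in `λ ≥ 0`, and `1 + x ≤ eˣ` squeezes it between `exp (-∑_{j ≤ k} λ / w j)` and
`exp (-∑_{j ≤ k} λ / (λ + w j))`. If `w k = a k + o(k)`, the upper bound is `O(k^{-s})` for some
`s > 1` as soon as `λ > a`, so `F` is finite on `(a, ∞)`, continuous there by dominated
convergence, and `O(1/λ)` at infinity. In case (b) `w k = o(k)`, so `a = 0` and the series
diverges trivially at `λ = a`; in case (a) it diverges at `λ = a = 1` because `∑ v k / k² < ∞`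
gives `∑_{j ≤ k} 1 / w j = log k + O(1)`, so the terms are of order `1/k`. Hence `F` increases
to `∞` as `λ ↓ a`, and the intermediate value theorem gives `F(λ*) = 1` with `λ* > a`; strict
monotonicity gives uniqueness.
-/

open Filter Asymptotics Finset Topology

/-- The Laplace transform at `lam` of the epoch of the `(k + 1)`-st birth in a pure birth process
with rates `w`; it is the `(k + 1)`-st term of the series defining the Malthusian parameter. -/
noncomputable def birthLaplace (w : ℕ → ℝ) (lam : ℝ) (k : ℕ) : ℝ :=
  ∏ j ∈ range (k + 1), w j / (lam + w j)

section

variable {w : ℕ → ℝ} {v : ℕ → ℝ} {lam l₁ l₂ c : ℝ}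

lemma birthLaplace_factor_pos (hw : ∀ k, 0 < w k) (hlam : 0 ≤ lam) (j : ℕ) :
    0 < w j / (lam + w j) :=
  div_pos (hw j) (by linarith [hw j])

lemma birthLaplace_pos (hw : ∀ k, 0 < w k) (hlam : 0 ≤ lam) (k : ℕ) :
    0 < birthLaplace w lam k :=
  prod_pos fun j _ => birthLaplace_factor_pos hw hlam j

lemma birthLaplace_factor_anti (hw : ∀ k, 0 < w k) (h₁ : 0 ≤ l₁) (h : l₁ ≤ l₂) (j : ℕ) :
    w j / (l₂ + w j) ≤ w j / (l₁ + w j) :=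
  div_le_div_of_nonneg_left (hw j).le (by linarith [hw j]) (by linarith)

lemma birthLaplace_le_birthLaplace (hw : ∀ k, 0 < w k) (h₁ : 0 ≤ l₁) (h : l₁ ≤ l₂) (k : ℕ) :
    birthLaplace w l₂ k ≤ birthLaplace w l₁ k :=
  prod_le_prod (fun j _ => (birthLaplace_factor_pos hw (h₁.trans h) j).le) fun j _ =>
    birthLaplace_factor_anti hw h₁ h j

lemma birthLaplace_lt_birthLaplace (hw : ∀ k, 0 < w k) (h₁ : 0 ≤ l₁) (h : l₁ < l₂) (k : ℕ) :
    birthLaplace w l₂ k < birthLaplace w l₁ k :=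
  prod_lt_prod_of_nonempty (fun j _ => birthLaplace_factor_pos hw (h₁.trans h.le) j)
    (fun j _ => div_lt_div_of_pos_left (hw j) (by linarith [hw j]) (by linarith))
    nonempty_range_add_one

/-- Only the factor `j = 0` is compared: it alone makes the series `O(1 / l₂)`. -/
lemma birthLaplace_le_mul (hw : ∀ k, 0 < w k) (h₁ : 0 ≤ l₁) (h : l₁ ≤ l₂) (k : ℕ) :
    birthLaplace w l₂ k ≤ (l₁ + w 0) / (l₂ + w 0) * birthLaplace w l₁ k := by
  have h₀ : w 0 / (l₂ + w 0) = (l₁ + w 0) / (l₂ + w 0) * (w 0 / (l₁ + w 0)) := by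
    have := hw 0
    field_simp
  simp only [birthLaplace, prod_range_succ', h₀]
  rw [mul_left_comm]
  refine mul_le_mul_of_nonneg_left (mul_le_mul_of_nonneg_right ?_
    (birthLaplace_factor_pos hw h₁ 0).le) (div_nonneg (by linarith [hw 0]) (by linarith [hw 0]))
  exact prod_le_prod (fun j _ => (birthLaplace_factor_pos hw (h₁.trans h) _).le) fun j _ =>
    birthLaplace_factor_anti hw h₁ h _

lemma summable_birthLaplace_of_le (hw : ∀ k, 0 < w k) (h₁ : 0 ≤ l₁) (h : l₁ ≤ l₂)
    (hs : Summable (birthLaplace w l₁)) : Summable (birthLaplace w l₂) :=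
  hs.of_nonneg_of_le (fun k => (birthLaplace_pos hw (h₁.trans h) k).le)
    (birthLaplace_le_birthLaplace hw h₁ h)

lemma summable_of_tsum_eq_one {f : ℕ → ℝ} (h : ∑' k, f k = 1) : Summable f := by
  by_contra hf
  simp [tsum_eq_zero_of_not_summable hf] at h

lemma tsum_birthLaplace_lt (hw : ∀ k, 0 < w k) (h₁ : 0 ≤ l₁) (h : l₁ < l₂)
    (hs : Summable (birthLaplace w l₁)) :
    ∑' k, birthLaplace w l₂ k < ∑' k, birthLaplace w l₁ k :=
  Summable.tsum_lt_tsum_of_nonneg (fun k => (birthLaplace_pos hw (h₁.trans h.le) k).le)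
    (birthLaplace_le_birthLaplace hw h₁ h.le) (birthLaplace_lt_birthLaplace hw h₁ h 0) hs

lemma eq_of_tsum_birthLaplace_eq_one (hw : ∀ k, 0 < w k) (h₁ : 0 ≤ l₁) (h₂ : 0 ≤ l₂)
    (e₁ : ∑' k, birthLaplace w l₁ k = 1) (e₂ : ∑' k, birthLaplace w l₂ k = 1) : l₁ = l₂ := by
  by_contra hne
  rcases lt_or_gt_of_ne hne with h | h
  · simpa [e₁, e₂] using tsum_birthLaplace_lt hw h₁ h (summable_of_tsum_eq_one e₁)
  · simpa [e₁, e₂] using tsum_birthLaplace_lt hw h₂ h (summable_of_tsum_eq_one e₂)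

lemma lt_of_tsum_birthLaplace_eq_one (hw : ∀ k, 0 < w k) (hlam : 0 ≤ lam)
    (hc : ¬Summable (birthLaplace w c)) (h : ∑' k, birthLaplace w lam k = 1) : c < lam := by
  by_contra! hle
  exact hc (summable_birthLaplace_of_le hw hlam hle (summable_of_tsum_eq_one h))

lemma continuousOn_birthLaplace (hw : ∀ k, 0 < w k) (k : ℕ) :
    ContinuousOn (fun lam => birthLaplace w lam k) (Set.Ici 0) :=
  continuousOn_finsetProd _ fun j _ =>
    continuousOn_const.div (continuousOn_id.add continuousOn_const) fun _ hlam =>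
      (add_pos_of_nonneg_of_pos hlam (hw j)).ne'

lemma continuousOn_tsum_birthLaplace (hw : ∀ k, 0 < w k) (h₁ : 0 ≤ l₁)
    (hs : Summable (birthLaplace w l₁)) :
    ContinuousOn (fun lam => ∑' k, birthLaplace w lam k) (Set.Ici l₁) :=
  continuousOn_tsum (fun k => (continuousOn_birthLaplace hw k).mono (Set.Ici_subset_Ici.2 h₁)) hs
    fun k lam hlam => by
      rw [Real.norm_of_nonneg (birthLaplace_pos hw (h₁.trans hlam) k).le]
      exact birthLaplace_le_birthLaplace hw h₁ hlam k

lemma exists_one_lt_tsum_birthLaplace (hw : ∀ k, 0 < w k) (hc : 0 ≤ c)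
    (hdiv : ¬Summable (birthLaplace w c)) (hsum : ∀ lam, c < lam → Summable (birthLaplace w lam)) :
    ∃ lam, c < lam ∧ 1 < ∑' k, birthLaplace w lam k := by
  obtain ⟨N, hN⟩ := (((not_summable_iff_tendsto_nat_atTop_of_nonneg
    fun k => (birthLaplace_pos hw hc k).le).1 hdiv).eventually_gt_atTop 1).exists
  have hcont : ContinuousWithinAt (fun lam => ∑ k ∈ range N, birthLaplace w lam k) (Set.Ioi c) c :=
    ((continuousOn_finsetSum _ fun k _ => continuousOn_birthLaplace hw k) c hc).mono
      fun lam hlam => hc.trans (le_of_lt hlam)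
  obtain ⟨lam, hlam, hclam⟩ :=
    ((hcont.eventually (lt_mem_nhds hN)).and self_mem_nhdsWithin).exists
  exact ⟨lam, hclam, hlam.trans_le <| (hsum lam hclam).sum_le_tsum _
    fun k _ => (birthLaplace_pos hw (hc.trans hclam.le) k).le⟩

lemma exists_tsum_birthLaplace_lt_one (hw : ∀ k, 0 < w k) (h₁ : 0 ≤ l₁)
    (hs : Summable (birthLaplace w l₁)) : ∃ l₂, l₁ ≤ l₂ ∧ ∑' k, birthLaplace w l₂ k < 1 := by
  set F := ∑' k, birthLaplace w l₁ k
  have hF : 0 ≤ F := tsum_nonneg fun k => (birthLaplace_pos hw h₁ k).le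
  have hw0 := hw 0
  refine ⟨l₁ + (l₁ + w 0) * F, by nlinarith, ?_⟩
  set l₂ := l₁ + (l₁ + w 0) * F
  calc ∑' k, birthLaplace w l₂ k ≤ ∑' k, (l₁ + w 0) / (l₂ + w 0) * birthLaplace w l₁ k :=
        Summable.tsum_le_tsum (birthLaplace_le_mul hw h₁ (by nlinarith))
          (summable_birthLaplace_of_le hw h₁ (by nlinarith) hs) (hs.mul_left _)
    _ = (l₁ + w 0) * F / (l₂ + w 0) := by rw [tsum_mul_left]; ring
    _ < 1 := by rw [div_lt_one (by nlinarith)]; linarith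

lemma exists_tsum_birthLaplace_eq_one (hw : ∀ k, 0 < w k) (hc : 0 ≤ c)
    (hdiv : ¬Summable (birthLaplace w c)) (hsum : ∀ lam, c < lam → Summable (birthLaplace w lam)) :
    ∃ lam, c < lam ∧ ∑' k, birthLaplace w lam k = 1 := by
  obtain ⟨l₁, hcl₁, hl₁⟩ := exists_one_lt_tsum_birthLaplace hw hc hdiv hsum
  have h₁ : 0 ≤ l₁ := hc.trans hcl₁.le
  obtain ⟨l₂, h, hl₂⟩ := exists_tsum_birthLaplace_lt_one hw h₁ (hsum l₁ hcl₁)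
  obtain ⟨lam, hlam, heq⟩ := intermediate_value_Icc' h
    ((continuousOn_tsum_birthLaplace hw h₁ (hsum l₁ hcl₁)).mono Set.Icc_subset_Ici_self)
    ⟨hl₂.le, hl₁.le⟩
  exact ⟨lam, hcl₁.trans_le hlam.1, heq⟩

lemma birthLaplace_le_exp (hw : ∀ k, 0 < w k) (hlam : 0 ≤ lam) (k : ℕ) :
    birthLaplace w lam k ≤ Real.exp (-∑ j ∈ range (k + 1), lam / (lam + w j)) := by
  rw [← sum_neg_distrib, Real.exp_sum]
  refine prod_le_prod (fun j _ => (birthLaplace_factor_pos hw hlam j).le) fun j _ => ?_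
  have := hw j
  calc w j / (lam + w j) = -(lam / (lam + w j)) + 1 := by field_simp; ring
    _ ≤ Real.exp (-(lam / (lam + w j))) := Real.add_one_le_exp _

lemma exp_le_birthLaplace (hw : ∀ k, 0 < w k) (hlam : 0 ≤ lam) (k : ℕ) :
    Real.exp (-∑ j ∈ range (k + 1), lam / w j) ≤ birthLaplace w lam k := by
  rw [← sum_neg_distrib, Real.exp_sum]
  refine prod_le_prod (fun j _ => (Real.exp_pos _).le) fun j _ => ?_
  have := hw j
  rw [Real.exp_neg, ← inv_div (lam + w j)]
  refine inv_anti₀ (by positivity : (0 : ℝ) < (lam + w j) / w j) ?_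
  calc (lam + w j) / w j = lam / w j + 1 := by field_simp
    _ ≤ Real.exp (lam / w j) := Real.add_one_le_exp _

lemma sum_range_inv_eq_harmonic (n : ℕ) :
    ∑ j ∈ range n, ((j : ℝ) + 1)⁻¹ = ((harmonic n : ℚ) : ℝ) := by
  simp [harmonic]

lemma summable_birthLaplace_of_eventually_le (hw : ∀ k, 0 < w k) {t : ℝ} (ht : 0 < t)
    (htl : t < lam) (h : ∀ᶠ j : ℕ in atTop, lam + w j ≤ t * (j + 1)) :
    Summable (birthLaplace w lam) := by
  set s := lam / t
  have hs : 1 < s := (one_lt_div ht).2 htl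
  have hlam : 0 ≤ lam := by linarith
  obtain ⟨N, hN⟩ := eventually_atTop.1 h
  -- `d` absorbs the indices `j < N`, where `s / (j + 1) ≤ lam / (lam + w j)` may fail
  set d := ∑ j ∈ range N, (lam / (lam + w j) - s * ((j : ℝ) + 1)⁻¹)
  have hsum : ∀ k, N ≤ k → d + s * Real.log (k + 2) ≤ ∑ j ∈ range (k + 1), lam / (lam + w j) := by
    intro k hk
    have htail : 0 ≤ ∑ j ∈ Ico N (k + 1), (lam / (lam + w j) - s * ((j : ℝ) + 1)⁻¹) := by
      refine sum_nonneg fun j hj => sub_nonneg.2 ?_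
      calc s * ((j : ℝ) + 1)⁻¹ = lam / (t * (j + 1)) := by simp only [s]; field_simp
        _ ≤ lam / (lam + w j) :=
          div_le_div_of_nonneg_left hlam (by linarith [hw j]) (hN j (mem_Ico.1 hj).1)
    have hlog : Real.log (k + 2) ≤ ∑ j ∈ range (k + 1), ((j : ℝ) + 1)⁻¹ := by
      rw [sum_range_inv_eq_harmonic]
      exact_mod_cast log_add_one_le_harmonic (k + 1)
    have hsplit : d + ∑ j ∈ Ico N (k + 1), (lam / (lam + w j) - s * ((j : ℝ) + 1)⁻¹) =
        ∑ j ∈ range (k + 1), lam / (lam + w j) - s * ∑ j ∈ range (k + 1), ((j : ℝ) + 1)⁻¹ := by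
      rw [sum_range_add_sum_Ico _ (Nat.le_succ_of_le hk), sum_sub_distrib, mul_sum]
    nlinarith [mul_le_mul_of_nonneg_left hlog (by linarith : (0 : ℝ) ≤ s)]
  refine Summable.of_norm_bounded_eventually_nat
    (g := fun k : ℕ => Real.exp (-d) * ((k + 2 : ℕ) : ℝ) ^ (-s)) ?_ ?_
  · exact ((summable_nat_add_iff 2).2 (Real.summable_nat_rpow.2 (by linarith))).mul_left _
  filter_upwards [eventually_ge_atTop N] with k hk
  rw [Real.norm_of_nonneg (birthLaplace_pos hw hlam k).le, Real.rpow_def_of_pos (by positivity),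
    ← Real.exp_add]
  refine (birthLaplace_le_exp hw hlam k).trans (Real.exp_le_exp.2 ?_)
  push_cast
  nlinarith [hsum k hk]

lemma summable_birthLaplace_of_isLittleO (hw : ∀ k, 0 < w k) {a : ℝ} (ha : 0 ≤ a)
    (hlam : a < lam) (ho : (fun j : ℕ => w j - a * j) =o[atTop] (fun j : ℕ => (j : ℝ))) :
    Summable (birthLaplace w lam) := by
  refine summable_birthLaplace_of_eventually_le hw (t := (a + lam) / 2) (by linarith)
    (by linarith) ?_
  filter_upwards [ho.bound (by linarith : 0 < (lam - a) / 4), eventually_ge_atTop 2]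
    with j hj hj2
  rw [Real.norm_eq_abs, Real.norm_of_nonneg (Nat.cast_nonneg j)] at hj
  have : (2 : ℝ) ≤ j := by exact_mod_cast hj2
  nlinarith [(abs_le.1 hj).2]

lemma isLittleO_natCast_rpow_natCast {α : ℝ} (hα : α < 1) :
    (fun j : ℕ => (j : ℝ) ^ α) =o[atTop] (fun j : ℕ => (j : ℝ)) := by
  refine IsLittleO.comp_tendsto (f := fun x : ℝ => x ^ α) (g := id) ?_ tendsto_natCast_atTop_atTop
  refine (isLittleO_iff_tendsto' ?_).2 ?_
  · filter_upwards [eventually_gt_atTop 0] with x hx h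
    exact absurd h hx.ne'
  · refine (tendsto_rpow_neg_atTop (by linarith : 0 < 1 - α)).congr' ?_
    filter_upwards [eventually_gt_atTop 0] with x hx
    rw [neg_sub, Real.rpow_sub_one hx.ne', id]

lemma not_summable_birthLaplace_of_sum_le_log (hw : ∀ k, 0 < w k) (hlam : 0 ≤ lam) {D : ℝ}
    (h : ∀ k : ℕ, ∑ j ∈ range (k + 1), lam / w j ≤ Real.log (k + 1) + D) :
    ¬Summable (birthLaplace w lam) := by
  intro hs
  have hbound (k : ℕ) : ((k : ℝ) + 1)⁻¹ ≤ Real.exp D * birthLaplace w lam k :=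
    calc ((k : ℝ) + 1)⁻¹ = Real.exp D * Real.exp (-(Real.log (k + 1) + D)) := by
          rw [Real.exp_neg, Real.exp_add, Real.exp_log (by positivity)]
          field_simp
      _ ≤ Real.exp D * Real.exp (-∑ j ∈ range (k + 1), lam / w j) := by gcongr; exact h k
      _ ≤ Real.exp D * birthLaplace w lam k := by gcongr; exact exp_le_birthLaplace hw hlam k
  have := (hs.mul_left (Real.exp D)).of_nonneg_of_le (fun k => by positivity) hbound
  exact Real.not_summable_natCast_inv ((summable_nat_add_iff 1).1 (by simpa using this))

lemma not_summable_birthLaplace_zero (hw : ∀ k, 0 < w k) : ¬Summable (birthLaplace w 0) := by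
  have h : birthLaplace w 0 = fun _ => 1 :=
    funext fun k => prod_eq_one fun j _ => by simp [(hw j).ne']
  simp [h, summable_const_iff]

lemma summable_inv_sub_inv_of_linear (hw : ∀ k, 0 < w k) (hv : ∀ k, w k = k + v k)
    (ho : v =o[atTop] (fun k : ℕ => (k : ℝ))) (hs : Summable fun k : ℕ => v k / (k : ℝ) ^ 2) :
    Summable fun j : ℕ => (w j)⁻¹ - ((j : ℝ) + 1)⁻¹ := by
  refine Summable.of_norm_bounded_eventually_nat
    (g := fun j : ℕ => 2 * (1 / (j : ℝ) ^ 2) + 2 * |v j / (j : ℝ) ^ 2|) ?_ ?_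
  · exact ((Real.summable_one_div_nat_pow.2 one_lt_two).mul_left 2).add (hs.abs.mul_left 2)
  filter_upwards [ho.bound one_half_pos, eventually_ge_atTop 1] with j hj hj1
  have hj1 : (1 : ℝ) ≤ j := by exact_mod_cast hj1
  rw [Real.norm_eq_abs, Real.norm_of_nonneg (Nat.cast_nonneg j)] at hj
  have hwj : (j : ℝ) / 2 ≤ w j := by rw [hv]; linarith [(abs_le.1 hj).1]
  have hnum : (j : ℝ) + 1 - w j = 1 - v j := by rw [hv]; ring
  have := hw j
  calc ‖(w j)⁻¹ - ((j : ℝ) + 1)⁻¹‖ = |1 - v j| / (w j * (j + 1)) := by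
        rw [Real.norm_eq_abs, inv_sub_inv (hw j).ne' (by positivity), hnum, abs_div,
          abs_of_pos (show 0 < w j * ((j : ℝ) + 1) by positivity)]
    _ ≤ (1 + |v j|) / ((j : ℝ) ^ 2 / 2) :=
        div_le_div₀ (by positivity) (by simpa using abs_sub 1 (v j)) (by positivity)
          (by nlinarith)
    _ = _ := by
        rw [abs_div, abs_of_pos (show (0 : ℝ) < (j : ℝ) ^ 2 by positivity)]
        field_simp

lemma not_summable_birthLaplace_one_of_linear (hw : ∀ k, 0 < w k) (hv : ∀ k, w k = k + v k)
    (ho : v =o[atTop] (fun k : ℕ => (k : ℝ))) (hs : Summable fun k : ℕ => v k / (k : ℝ) ^ 2) :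
    ¬Summable (birthLaplace w 1) := by
  have hd := summable_inv_sub_inv_of_linear hw hv ho hs
  refine not_summable_birthLaplace_of_sum_le_log hw zero_le_one
    (D := 1 + ∑' j, |(w j)⁻¹ - ((j : ℝ) + 1)⁻¹|) fun k => ?_
  have hH : ∑ j ∈ range (k + 1), ((j : ℝ) + 1)⁻¹ ≤ 1 + Real.log (k + 1) := by
    rw [sum_range_inv_eq_harmonic]
    exact_mod_cast harmonic_le_one_add_log (k + 1)
  have hdiff : ∑ j ∈ range (k + 1), ((w j)⁻¹ - ((j : ℝ) + 1)⁻¹)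
      ≤ ∑' j, |(w j)⁻¹ - ((j : ℝ) + 1)⁻¹| :=
    (sum_le_sum fun j _ => le_abs_self _).trans (hd.abs.sum_le_tsum _ fun j _ => abs_nonneg _)
  simp only [one_div, sum_sub_distrib] at hdiff ⊢
  linarith

end

theorem statement4_general
    (w : ℕ → ℝ) (hw : ∀ k, 0 < w k)
    (hab :
      (∃ v : ℕ → ℝ, (∀ k, w k = (k : ℝ) + v k) ∧
        v =o[atTop] (fun k : ℕ => (k : ℝ)) ∧
        Summable (fun k : ℕ => v k / (k : ℝ) ^ 2)) ∨
      (∃ α : ℝ, ∃ v : ℕ → ℝ, 0 < α ∧ α < 1 ∧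
        (∀ k, w k = (k : ℝ) ^ α + v k) ∧
        v =o[atTop] (fun k : ℕ => (k : ℝ) ^ α))) :
    (∃! lam : ℝ, 0 < lam ∧
        ∑' k : ℕ, ∏ j ∈ Finset.range (k + 1), w j / (lam + w j) = 1) ∧
    ((∃ v : ℕ → ℝ, (∀ k, w k = (k : ℝ) + v k) ∧
        v =o[atTop] (fun k : ℕ => (k : ℝ)) ∧
        Summable (fun k : ℕ => v k / (k : ℝ) ^ 2)) →
      ∀ lam : ℝ, 0 < lam →
        ∑' k : ℕ, ∏ j ∈ Finset.range (k + 1), w j / (lam + w j) = 1 → 1 < lam) := by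
  obtain ⟨c, hc, hsum, hdiv⟩ : ∃ c : ℝ, 0 ≤ c ∧
      (∀ lam, c < lam → Summable (birthLaplace w lam)) ∧ ¬Summable (birthLaplace w c) := by
    rcases hab with ⟨v, hv, ho, hs⟩ | ⟨α, v, -, hα, hv, ho⟩
    · refine ⟨1, zero_le_one, fun lam hlam => summable_birthLaplace_of_isLittleO hw zero_le_one
        hlam ?_, not_summable_birthLaplace_one_of_linear hw hv ho hs⟩
      simpa [hv] using ho
    · refine ⟨0, le_rfl, fun lam hlam => summable_birthLaplace_of_isLittleO hw le_rfl hlam ?_,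
        not_summable_birthLaplace_zero hw⟩
      simpa [hv] using (isLittleO_natCast_rpow_natCast hα).add
        (ho.trans (isLittleO_natCast_rpow_natCast hα))
  obtain ⟨lam, hclam, hlam⟩ := exists_tsum_birthLaplace_eq_one hw hc hdiv hsum
  refine ⟨⟨lam, ⟨hc.trans_lt hclam, hlam⟩, fun l hl =>
    eq_of_tsum_birthLaplace_eq_one hw hl.1.le (hc.trans hclam.le) hl.2 hlam⟩, ?_⟩
  rintro ⟨v, hv, ho, hs⟩ l hl hl1
  exact lt_of_tsum_birthLaplace_eq_one hw hl.le
    (not_summable_birthLaplace_one_of_linear hw hv ho hs) hl1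

/-- Under hypothesis (a) `w k = k + v k`, `v = o(k)`, `∑ v k / k²` convergent,
or (b) `w k = k^α + v k`, `0 < α < 1`, `v = o(k^α)`, there is a unique `λ* > 0` with
`∑_{k=1}^∞ ∏_{j=0}^{k-1} w j / (λ* + w j) = 1`; moreover in case (a) one has `λ* > 1`. -/
theorem statement4
    (w : ℕ → ℝ) (hw : ∀ k, 0 < w k) (hw0 : w 0 = 1)
    (hab :
      (∃ v : ℕ → ℝ, (∀ k, w k = (k : ℝ) + v k) ∧
        v =o[atTop] (fun k : ℕ => (k : ℝ)) ∧
        Summable (fun k : ℕ => v k / (k : ℝ) ^ 2)) ∨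
      (∃ α : ℝ, ∃ v : ℕ → ℝ, 0 < α ∧ α < 1 ∧
        (∀ k, w k = (k : ℝ) ^ α + v k) ∧
        v =o[atTop] (fun k : ℕ => (k : ℝ) ^ α))) :
    (∃! lam : ℝ, 0 < lam ∧
        ∑' k : ℕ, ∏ j ∈ Finset.range (k + 1), w j / (lam + w j) = 1) ∧
    ((∃ v : ℕ → ℝ, (∀ k, w k = (k : ℝ) + v k) ∧
        v =o[atTop] (fun k : ℕ => (k : ℝ)) ∧
        Summable (fun k : ℕ => v k / (k : ℝ) ^ 2)) →
      ∀ lam : ℝ, 0 < lam →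
        ∑' k : ℕ, ∏ j ∈ Finset.range (k + 1), w j / (lam + w j) = 1 → 1 < lam) :=
  statement4_general w hw hab
end

section
/- Let w : ℕ → (0,∞) and suppose r > 0 satisfies r ≥ w(k+1) − w(k) for all k ≥ 0, with strict inequality r > w(k) − w(k−1) for all k ≥ 1. Define f_r(k) := ∏_{j=0}^{k−1} (r + w(j))/w(j) and extend f_r to a function on [0,∞) by piecewise linear interpolation between consecutive integers. Then this extension is a convex function on [0,∞). -/
/-- If `r > 0` satisfies `r ≥ w (k+1) - w k` for all `k ≥ 0` and
`r > w k - w (k-1)` for all `k ≥ 1`, then the piecewise linear extension of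
`f_r k = ∏_{j=0}^{k-1} (r + w j)/w j` to `[0,∞)` is convex. -/
theorem statement10
    (w : ℕ → ℝ) (hw : ∀ k, 0 < w k) (r : ℝ) (hr : 0 < r)
    (hr1 : ∀ k : ℕ, w (k + 1) - w k ≤ r)
    (hr2 : ∀ k : ℕ, 1 ≤ k → w k - w (k - 1) < r)
    (f : ℕ → ℝ) (hf : ∀ k, f k = ∏ j ∈ Finset.range k, (r + w j) / w j)
    (F : ℝ → ℝ)
    (hF : ∀ k : ℕ, ∀ x ∈ Set.Icc (k : ℝ) ((k : ℝ) + 1),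
      F x = f k + (x - (k : ℝ)) * (f (k + 1) - f k)) :
    ConvexOn ℝ (Set.Ici (0 : ℝ)) F := by
  -- positivity of f
  have hfpos : ∀ k, 0 < f k := by
    intro k
    rw [hf]
    exact Finset.prod_pos fun j _ => div_pos (by linarith [hw j]) (hw j)
  -- slopes are nondecreasing
  have hs : ∀ k, f (k + 1) - f k ≤ f (k + 2) - f (k + 1) := by
    intro k
    have h1 : f (k + 1) = f k * ((r + w k) / w k) := by
      rw [hf, hf, Finset.prod_range_succ]
    have h2 : f (k + 2) = f (k + 1) * ((r + w (k + 1)) / w (k + 1)) := by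
      rw [hf, hf, Finset.prod_range_succ]
    have hwk := hw k; have hwk1 := hw (k + 1)
    have key : f (k + 2) - f (k + 1) - (f (k + 1) - f k)
        = f k * r * (r + w k - w (k + 1)) / (w k * w (k + 1)) := by
      rw [h2, h1]; field_simp; ring
    have hnn : 0 ≤ f k * r * (r + w k - w (k + 1)) / (w k * w (k + 1)) := by
      apply div_nonneg _ (by positivity)
      exact mul_nonneg (mul_nonneg (hfpos k).le hr.le) (by linarith [hr1 k])
    linarith [key ▸ hnn]
  -- the affine pieces
  set L : ℕ → ℝ → ℝ := fun k x => f k + (x - (k : ℝ)) * (f (k + 1) - f k) with hL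
  -- L (j+1) x - L j x = (x - (j+1)) * (slope difference)
  have hstep : ∀ (j : ℕ) (x : ℝ), L (j + 1) x - L j x
      = (x - ((j : ℝ) + 1)) * ((f (j + 2) - f (j + 1)) - (f (j + 1) - f j)) := by
    intro j x
    simp only [hL]
    push_cast
    ring
  -- going up: L k x ≤ L m x when k ≤ m and m ≤ x
  have hup : ∀ (k m : ℕ), k ≤ m → ∀ x : ℝ, (m : ℝ) ≤ x → L k x ≤ L m x := by
    intro k m hkm
    induction m, hkm using Nat.le_induction with
    | base => intro x _; exact le_refl _
    | succ n hn ih =>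
      intro x hx
      have hx' : (n : ℝ) + 1 ≤ x := by push_cast at hx; linarith
      have h1 : L k x ≤ L n x := ih x (by linarith)
      have h2 : 0 ≤ (x - ((n : ℝ) + 1)) * ((f (n + 2) - f (n + 1)) - (f (n + 1) - f n)) :=
        mul_nonneg (by linarith) (by linarith [hs n])
      linarith [hstep n x]
  -- going down: L k x ≤ L m x when m ≤ k and x ≤ m + 1
  have hdown : ∀ (m k : ℕ), m ≤ k → ∀ x : ℝ, x ≤ (m : ℝ) + 1 → L k x ≤ L m x := by
    intro m k hmk
    induction k, hmk using Nat.le_induction with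
    | base => intro x _; exact le_refl _
    | succ n hn ih =>
      intro x hx
      have hx' : x ≤ (n : ℝ) + 1 := by
        have : (m : ℝ) ≤ (n : ℝ) := by exact_mod_cast hn
        linarith
      have h2 : (x - ((n : ℝ) + 1)) * ((f (n + 2) - f (n + 1)) - (f (n + 1) - f n)) ≤ 0 :=
        mul_nonpos_of_nonpos_of_nonneg (by linarith) (by linarith [hs n])
      have h1 : L n x ≤ L m x := ih x hx
      linarith [hstep n x]
  -- main support lemma: L k x ≤ L m x whenever x ∈ [m, m+1]
  have hsupp : ∀ (k m : ℕ) (x : ℝ), (m : ℝ) ≤ x → x ≤ (m : ℝ) + 1 → L k x ≤ L m x := by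
    intro k m x hxm hxm1
    rcases le_total k m with hkm | hmk
    · exact hup k m hkm x hxm
    · exact hdown m k hmk x hxm1
  -- convexity
  constructor
  · exact convex_Ici 0
  · intro x hx y hy a b ha hb hab
    simp only [Set.mem_Ici] at hx hy
    simp only [smul_eq_mul]
    set z := a * x + b * y with hz
    have hz0 : 0 ≤ z := by positivity
    set m := ⌊z⌋₊ with hm
    have hmz : (m : ℝ) ≤ z := Nat.floor_le hz0
    have hzm : z ≤ (m : ℝ) + 1 := (Nat.lt_floor_add_one z).le
    have hFz : F z = L m z := hF m z ⟨hmz, hzm⟩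
    -- F x ≥ L m x
    have hFx : L m x ≤ F x := by
      set n := ⌊x⌋₊ with hn
      have h1 : (n : ℝ) ≤ x := Nat.floor_le hx
      have h2 : x ≤ (n : ℝ) + 1 := (Nat.lt_floor_add_one x).le
      rw [hF n x ⟨h1, h2⟩]
      exact hsupp m n x h1 h2
    have hFy : L m y ≤ F y := by
      set n := ⌊y⌋₊ with hn
      have h1 : (n : ℝ) ≤ y := Nat.floor_le hy
      have h2 : y ≤ (n : ℝ) + 1 := (Nat.lt_floor_add_one y).le
      rw [hF n y ⟨h1, h2⟩]
      exact hsupp m n y h1 h2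
    have haff : L m z = a * L m x + b * L m y := by
      simp only [hL, hz]
      have hb' : b = 1 - a := by linarith
      rw [hb']; ring
    calc F z = a * L m x + b * L m y := by rw [hFz, haff]
      _ ≤ a * F x + b * F y :=
        add_le_add (mul_le_mul_of_nonneg_left hFx ha) (mul_le_mul_of_nonneg_left hFy hb)
end

section
/- Let w : ℕ → (0,∞) with w(0) = 1 satisfy w(k) = k + v(k) where v(k) = o(k) as k → ∞ and ∑_{k≥1} v(k)/k² converges. Then for every r > 0 there exist constants 0 < D₁ ≤ D₂ < ∞ such that for all k ≥ 1, D₁ k^r ≤ ∏_{j=0}^{k−1} (r + w(j))/w(j) ≤ D₂ k^r. -/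
/-!
Write `f_r(k) = ∏_{j<k} (1 + r / w j)` and compare it factor by factor with the telescoping
product `k^r = ∏_{1 ≤ j < k} (1 + 1/j)^r`. Since `log (1 + x) = x + O(x²)`, the logarithm of the
ratio of the `j`-th factors is `r / w j - r / j + O(1/j²) = -r v(j) / (j w(j)) + O(1/j²)`, which
is `O((|v j| + 1) / j²)` once `|v j| ≤ j / 2`. These logarithms are therefore summable, so
`log (f_r(k) / k^r)` stays bounded, and exponentiating gives `D₁ = e^{-M}`, `D₂ = e^M`.
-/

open Filter Asymptotics
open Real Finset

lemma abs_log_one_add_sub_self_le {x : ℝ} (hx : 0 ≤ x) : |log (1 + x) - x| ≤ x ^ 2 := by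
  have hpos : 0 < 1 + x := by linarith
  have upper : log (1 + x) ≤ x := by linarith [log_le_sub_one_of_pos hpos]
  have lower : x - x ^ 2 ≤ log (1 + x) :=
    calc x - x ^ 2 ≤ x / (1 + x) := by rw [le_div_iff₀ hpos]; nlinarith
      _ = 1 - (1 + x)⁻¹ := by field_simp; ring
      _ ≤ log (1 + x) := one_sub_inv_le_log_of_pos hpos
  rw [abs_le]
  constructor <;> nlinarith

/-- The log-ratio of the `j`-th factors of `f_r(k)` and of `k^r = ∏_{j<k} (1 + 1/j)^r`. -/
noncomputable def logDefect (r : ℝ) (w : ℕ → ℝ) (j : ℕ) : ℝ :=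
  log (1 + r / w j) - r * log (1 + 1 / j)

lemma abs_logDefect_le {r : ℝ} (hr : 0 ≤ r) {w : ℕ → ℝ} {j : ℕ} (hj : 0 < j)
    (hwj : (j : ℝ) / 2 ≤ w j) :
    |logDefect r w j| ≤ (4 * r ^ 2 + r) / j ^ 2 + 2 * r * |w j - j| / j ^ 2 := by
  have hj' : (0 : ℝ) < j := by exact_mod_cast hj
  have hw : 0 < w j := by linarith
  set a := r / w j with ha_def
  set b := 1 / (j : ℝ) with hb_def
  have hA := abs_log_one_add_sub_self_le (x := a) (by positivity)
  have hB := abs_log_one_add_sub_self_le (x := b) (by positivity)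
  have ha_sq : a ^ 2 ≤ 4 * r ^ 2 / j ^ 2 := by
    have : a ≤ 2 * r / j := by rw [ha_def, div_le_div_iff₀ hw hj']; nlinarith
    calc a ^ 2 ≤ (2 * r / j) ^ 2 := pow_le_pow_left₀ (by positivity) this 2
      _ = 4 * r ^ 2 / j ^ 2 := by ring
  have hb_sq : b ^ 2 = 1 / j ^ 2 := by rw [hb_def, div_pow, one_pow]
  have hlin : |a - r * b| ≤ 2 * r * |w j - j| / j ^ 2 := by
    have : a - r * b = r * (j - w j) / (w j * j) := by rw [ha_def, hb_def]; field_simp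
    rw [this, abs_div, abs_mul, abs_of_nonneg hr, abs_sub_comm, abs_of_pos (mul_pos hw hj'),
      div_le_div_iff₀ (by positivity) (by positivity)]
    have : 0 ≤ r * |w j - j| * j := by positivity
    nlinarith [mul_le_mul_of_nonneg_left (show (j : ℝ) ≤ 2 * w j by linarith) this]
  calc |logDefect r w j|
      = |(log (1 + a) - a) - r * (log (1 + b) - b) + (a - r * b)| := by
        simp only [logDefect, ha_def, hb_def]; ring_nf
    _ ≤ |log (1 + a) - a| + r * |log (1 + b) - b| + |a - r * b| := by
        have := abs_sub (log (1 + a) - a) (r * (log (1 + b) - b))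
        rw [abs_mul, abs_of_nonneg hr] at this
        linarith [abs_add_le ((log (1 + a) - a) - r * (log (1 + b) - b)) (a - r * b)]
    _ ≤ (4 * r ^ 2 + r) / j ^ 2 + 2 * r * |w j - j| / j ^ 2 := by
        have := mul_le_mul_of_nonneg_left hB hr
        rw [hb_sq, mul_one_div] at this
        rw [add_div]
        linarith

lemma summable_logDefect {r : ℝ} (hr : 0 ≤ r) {w : ℕ → ℝ}
    (hv : (fun k => w k - k) =o[atTop] fun k : ℕ => (k : ℝ))
    (hvsum : Summable fun k : ℕ => (w k - k) / (k : ℝ) ^ 2) :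
    Summable (logDefect r w) := by
  have hdom : Summable fun j : ℕ => (4 * r ^ 2 + r) / j ^ 2 + 2 * r * |w j - j| / j ^ 2 := by
    have hsq : Summable fun j : ℕ => 1 / (j : ℝ) ^ 2 :=
      Real.summable_one_div_nat_pow.2 one_lt_two
    have habs : Summable fun j : ℕ => |w j - j| / (j : ℝ) ^ 2 :=
      hvsum.abs.congr fun j => by rw [abs_div, abs_sq]
    exact ((hsq.mul_left (4 * r ^ 2 + r)).add (habs.mul_left (2 * r))).congr fun j => by ring
  refine .of_norm_bounded_eventually_nat hdom ?_
  filter_upwards [hv.def (c := 1 / 2) (by norm_num), eventually_gt_atTop 0] with j hj hj0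
  rw [Real.norm_eq_abs, Real.norm_eq_abs, Nat.abs_cast, abs_le] at hj
  exact abs_logDefect_le hr hj0 (by linarith)

/-- The `j = 0` term is harmless because of the junk values `1 / 0 = 0` and `log 0 = 0`. -/
lemma sum_range_log_one_add_one_div (k : ℕ) :
    ∑ j ∈ range k, log (1 + 1 / (j : ℝ)) = log k := by
  induction k with
  | zero => simp
  | succ k ih =>
    rw [sum_range_succ, ih]
    rcases k.eq_zero_or_pos with rfl | hk
    · simp
    · have hk' : (0 : ℝ) < k := by exact_mod_cast hk
      rw [one_add_div hk'.ne', log_div (by positivity) hk'.ne']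
      push_cast
      ring

lemma prod_div_eq_exp_sum_logDefect_mul_rpow {r : ℝ} (hr : 0 ≤ r) {w : ℕ → ℝ}
    (hw : ∀ j, 0 < w j) {k : ℕ} (hk : 0 < k) :
    ∏ j ∈ range k, (r + w j) / w j = exp (∑ j ∈ range k, logDefect r w j) * (k : ℝ) ^ r := by
  have hlog : ∑ j ∈ range k, logDefect r w j + log k * r =
      ∑ j ∈ range k, log ((r + w j) / w j) := by
    rw [← sum_range_log_one_add_one_div, sum_mul, ← sum_add_distrib]
    refine sum_congr rfl fun j _ => ?_
    rw [logDefect, one_add_div (hw j).ne', add_comm (w j)]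
    ring
  rw [rpow_def_of_pos (by exact_mod_cast hk), ← exp_add, hlog, exp_sum]
  exact prod_congr rfl fun j _ => (exp_log (div_pos (by linarith [hw j]) (hw j))).symm

theorem statement12_general
    (w v : ℕ → ℝ) (hw : ∀ k, 0 < w k)
    (hwv : ∀ k, w k = (k : ℝ) + v k)
    (hv : v =o[atTop] fun k : ℕ => (k : ℝ))
    (hvsum : Summable (fun k : ℕ => v k / (k : ℝ) ^ 2))
    (r : ℝ) (hr : 0 < r) :
    ∃ D₁ D₂ : ℝ, 0 < D₁ ∧ D₁ ≤ D₂ ∧ ∀ k : ℕ, 1 ≤ k →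
      D₁ * (k : ℝ) ^ r ≤ (∏ j ∈ Finset.range k, (r + w j) / w j) ∧
      (∏ j ∈ Finset.range k, (r + w j) / w j) ≤ D₂ * (k : ℝ) ^ r := by
  have hv_eq (k : ℕ) : w k - k = v k := by rw [hwv]; ring
  have hsum := summable_logDefect hr.le (w := w) (by simpa only [hv_eq]) (by simpa only [hv_eq])
  obtain ⟨M, hM⟩ := hsum.hasSum.tendsto_sum_nat.abs.bddAbove_range
  have hM0 : 0 ≤ M := (abs_nonneg _).trans (hM ⟨0, rfl⟩)
  refine ⟨exp (-M), exp M, exp_pos _, exp_le_exp.2 (by linarith), fun k hk => ?_⟩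
  obtain ⟨hlo, hhi⟩ := abs_le.1 (hM ⟨k, rfl⟩)
  have hkr : 0 ≤ (k : ℝ) ^ r := by positivity
  rw [prod_div_eq_exp_sum_logDefect_mul_rpow hr.le hw hk]
  exact ⟨mul_le_mul_of_nonneg_right (exp_le_exp.2 hlo) hkr,
    mul_le_mul_of_nonneg_right (exp_le_exp.2 hhi) hkr⟩

/-- If `w k = k + v k` with `v k = o(k)` and `∑ v k / k²` convergent, then for
every `r > 0` there are `0 < D₁ ≤ D₂ < ∞` with `D₁ k^r ≤ ∏_{j=0}^{k-1} (r + w j)/w j ≤ D₂ k^r`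
for all `k ≥ 1`. -/
theorem statement12
    (w v : ℕ → ℝ) (hw : ∀ k, 0 < w k) (hw0 : w 0 = 1)
    (hwv : ∀ k, w k = (k : ℝ) + v k)
    (hv : v =o[atTop] fun k : ℕ => (k : ℝ))
    (hvsum : Summable (fun k : ℕ => v k / (k : ℝ) ^ 2))
    (r : ℝ) (hr : 0 < r) :
    ∃ D₁ D₂ : ℝ, 0 < D₁ ∧ D₁ ≤ D₂ ∧ ∀ k : ℕ, 1 ≤ k →
      D₁ * (k : ℝ) ^ r ≤ (∏ j ∈ Finset.range k, (r + w j) / w j) ∧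
      (∏ j ∈ Finset.range k, (r + w j) / w j) ≤ D₂ * (k : ℝ) ^ r :=
  statement12_general w v hw hwv hv hvsum r hr
end

section
/- Let 0 < α < 1 and let w : ℕ → (0,∞) with w(0) = 1 satisfy w(k) = k^α + v(k) where v(k) = o(k^α) as k → ∞. Then for every r > 0 there exist constants c₁, c₂ > 0 and D < ∞ such that for all k ≥ 1, exp(c₁ k^{1−α} − D) ≤ ∏_{j=0}^{k−1} (r + w(j))/w(j) ≤ exp(c₂ k^{1−α} + D). -/
open Filter Asymptotics Finset

/-!
Since `r / (r + w) ≤ log ((r + w) / w) ≤ r / w`, the logarithm of the product is comparable to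
`∑_{j<k} r / w j`. Eventually `w j` lies between `j^α / 2` and `3 j^α / 2`, so past some index `N`
the terms are at least `r / (3 k^α)` and at most `2 r j^(-α)`; summing, with
`∑_{j<k} j^(-α) ≤ k^(1-α) / (1-α)` by telescoping, gives the two exponents, and the first `N`
terms are absorbed into `D`.
-/

lemma rpow_neg_le_rpow_sub_rpow {α : ℝ} (hα0 : 0 ≤ α) (hα1 : α ≤ 1) {x : ℝ} (hx : 0 ≤ x) :
    (1 - α) * (x + 1) ^ (-α) ≤ (x + 1) ^ (1 - α) - x ^ (1 - α) := by
  have hy : 0 < x + 1 := by linarith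
  have ht : 1 + -(x + 1)⁻¹ = x / (x + 1) := by field_simp; ring
  have hBernoulli : (x / (x + 1)) ^ (1 - α) ≤ 1 + (1 - α) * -(x + 1)⁻¹ := by
    rw [← ht]
    exact rpow_one_add_le_one_add_mul_self
      (by simp [inv_le_one_of_one_le₀ (by linarith : 1 ≤ x + 1)]) (by linarith) (by linarith)
  have hsplit : (x + 1) ^ (1 - α) * (x + 1)⁻¹ = (x + 1) ^ (-α) := by
    rw [← Real.rpow_neg_one, ← Real.rpow_add hy]; ring_nf
  calc (1 - α) * (x + 1) ^ (-α)
      = (x + 1) ^ (1 - α) - (x + 1) ^ (1 - α) * (1 + (1 - α) * -(x + 1)⁻¹) := by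
        rw [← hsplit]; ring
    _ ≤ (x + 1) ^ (1 - α) - (x + 1) ^ (1 - α) * (x / (x + 1)) ^ (1 - α) := by gcongr
    _ = (x + 1) ^ (1 - α) - x ^ (1 - α) := by
        rw [← Real.mul_rpow hy.le (by positivity), mul_div_cancel₀ _ hy.ne']

lemma sum_range_add_one_rpow_neg_le {α : ℝ} (hα0 : 0 ≤ α) (hα1 : α < 1) (n : ℕ) :
    ∑ j ∈ range n, ((j : ℝ) + 1) ^ (-α) ≤ (n : ℝ) ^ (1 - α) / (1 - α) := by
  have h1α : 0 < 1 - α := by linarith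
  induction n with
  | zero => simp [Real.zero_rpow h1α.ne']
  | succ n ih =>
    rw [sum_range_succ, Nat.cast_succ, le_div_iff₀ h1α]
    rw [le_div_iff₀ h1α] at ih
    nlinarith [rpow_neg_le_rpow_sub_rpow hα0 hα1.le n.cast_nonneg]

/-- The `j = 0` term vanishes because `(0 : ℝ) ^ (-α) = 0` for `α ≠ 0`. -/
lemma sum_range_rpow_neg_le {α : ℝ} (hα0 : 0 < α) (hα1 : α < 1) (k : ℕ) :
    ∑ j ∈ range k, (j : ℝ) ^ (-α) ≤ (k : ℝ) ^ (1 - α) / (1 - α) := by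
  rcases k with _ | n
  · simp [Real.zero_rpow (by linarith : 1 - α ≠ 0)]
  rw [sum_range_succ', Nat.cast_zero, Real.zero_rpow (neg_ne_zero.2 hα0.ne'), add_zero]
  push_cast
  calc ∑ j ∈ range n, ((j : ℝ) + 1) ^ (-α) ≤ (n : ℝ) ^ (1 - α) / (1 - α) :=
        sum_range_add_one_rpow_neg_le hα0.le hα1 n
    _ ≤ ((n : ℝ) + 1) ^ (1 - α) / (1 - α) := by
        gcongr
        linarith

lemma log_add_div_le {r w : ℝ} (hr : 0 ≤ r) (hw : 0 < w) : Real.log ((r + w) / w) ≤ r / w := by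
  have hsub : (r + w) / w - 1 = r / w := by field_simp; ring
  exact hsub ▸ Real.log_le_sub_one_of_pos (by positivity)

lemma div_add_le_log {r w : ℝ} (hr : 0 ≤ r) (hw : 0 < w) :
    r / (r + w) ≤ Real.log ((r + w) / w) := by
  have := Real.one_sub_inv_le_log_of_pos (by positivity : 0 < (r + w) / w)
  rwa [inv_div, one_sub_div (by positivity), add_sub_cancel_right] at this

lemma sum_range_le_sum_range_add_sum_range {M : Type*} [AddCommMonoid M] [PartialOrder M]
    [IsOrderedAddMonoid M] {f g : ℕ → M} {N : ℕ} (hf : ∀ j, 0 ≤ f j) (hg : ∀ j, 0 ≤ g j)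
    (hfg : ∀ j, N ≤ j → f j ≤ g j) (k : ℕ) :
    ∑ j ∈ range k, f j ≤ ∑ j ∈ range N, f j + ∑ j ∈ range k, g j := by
  rcases le_or_gt k N with hkN | hNk
  · calc ∑ j ∈ range k, f j ≤ ∑ j ∈ range N, f j :=
          sum_le_sum_of_subset_of_nonneg (range_subset_range.2 hkN) fun j _ _ => hf j
      _ ≤ ∑ j ∈ range N, f j + ∑ j ∈ range k, g j :=
          le_add_of_nonneg_right (sum_nonneg fun j _ => hg j)
  · rw [← sum_range_add_sum_Ico _ hNk.le]
    gcongr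
    calc ∑ j ∈ Ico N k, f j ≤ ∑ j ∈ Ico N k, g j :=
          sum_le_sum fun j hj => hfg j (mem_Ico.1 hj).1
      _ ≤ ∑ j ∈ range k, g j :=
          sum_le_sum_of_subset_of_nonneg (fun j hj => mem_range.2 (mem_Ico.1 hj).2)
            fun j _ _ => hg j

lemma sub_mul_le_sum_range {f : ℕ → ℝ} {N k : ℕ} {c : ℝ} (hf : ∀ j, 0 ≤ f j) (hc : 0 ≤ c)
    (hfc : ∀ j, N ≤ j → j < k → c ≤ f j) :
    ((k : ℝ) - N) * c ≤ ∑ j ∈ range k, f j := by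
  rcases le_or_gt k N with hkN | hNk
  · have : (k : ℝ) ≤ N := by exact_mod_cast hkN
    exact (mul_nonpos_of_nonpos_of_nonneg (by linarith) hc).trans (sum_nonneg fun j _ => hf j)
  · calc ((k : ℝ) - N) * c = ∑ _j ∈ Ico N k, c := by
          rw [sum_const, Nat.card_Ico, nsmul_eq_mul, Nat.cast_sub hNk.le]
      _ ≤ ∑ j ∈ Ico N k, f j := sum_le_sum fun j hj => hfc j (mem_Ico.1 hj).1 (mem_Ico.1 hj).2
      _ ≤ ∑ j ∈ range k, f j :=
          sum_le_sum_of_subset_of_nonneg (fun j hj => mem_range.2 (mem_Ico.1 hj).2)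
            fun j _ _ => hf j

section WeightedProduct

variable {α r : ℝ} {w : ℕ → ℝ}

lemma exists_sum_log_le (hα0 : 0 < α) (hα1 : α < 1) (hr : 0 < r) (hw : ∀ j, 0 < w j) {a : ℝ}
    (ha : 0 < a) (hlo : ∀ᶠ j : ℕ in atTop, a * (j : ℝ) ^ α ≤ w j) :
    ∃ C, ∀ k : ℕ, ∑ j ∈ range k, Real.log ((r + w j) / w j)
      ≤ r / (a * (1 - α)) * (k : ℝ) ^ (1 - α) + C := by
  obtain ⟨N, hN⟩ := eventually_atTop.1 (hlo.and (eventually_ge_atTop 1))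
  refine ⟨∑ j ∈ range N, Real.log ((r + w j) / w j), fun k => ?_⟩
  have hterm : ∀ j, N ≤ j → Real.log ((r + w j) / w j) ≤ r / a * (j : ℝ) ^ (-α) := by
    intro j hj
    have hpos : 0 < (j : ℝ) ^ α := Real.rpow_pos_of_pos (by exact_mod_cast (hN j hj).2) α
    calc Real.log ((r + w j) / w j) ≤ r / w j := log_add_div_le hr.le (hw j)
      _ ≤ r / (a * (j : ℝ) ^ α) := by gcongr; exact (hN j hj).1
      _ = r / a * (j : ℝ) ^ (-α) := by rw [Real.rpow_neg j.cast_nonneg]; field_simp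
  calc ∑ j ∈ range k, Real.log ((r + w j) / w j)
      ≤ ∑ j ∈ range N, Real.log ((r + w j) / w j) + ∑ j ∈ range k, r / a * (j : ℝ) ^ (-α) :=
        sum_range_le_sum_range_add_sum_range
          (fun j => Real.log_nonneg ((le_div_iff₀ (hw j)).2 (by linarith)))
          (fun j => by positivity) hterm k
    _ ≤ ∑ j ∈ range N, Real.log ((r + w j) / w j) + r / a * ((k : ℝ) ^ (1 - α) / (1 - α)) := by
        rw [← mul_sum]
        gcongr
        exact sum_range_rpow_neg_le hα0 hα1 k
    _ = _ := by field_simp; ring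

lemma exists_le_sum_log (hα0 : 0 ≤ α) (hr : 0 < r) (hw : ∀ j, 0 < w j) {b : ℝ} (hb : 0 < b)
    (hhi : ∀ᶠ j : ℕ in atTop, r + w j ≤ b * (j : ℝ) ^ α) :
    ∃ D, ∀ k : ℕ, 1 ≤ k →
      r / b * (k : ℝ) ^ (1 - α) - D ≤ ∑ j ∈ range k, Real.log ((r + w j) / w j) := by
  obtain ⟨N, hN⟩ := eventually_atTop.1 hhi
  refine ⟨N * r / b, fun k hk => ?_⟩
  have hk : (1 : ℝ) ≤ k := by exact_mod_cast hk
  have hkα : 1 ≤ (k : ℝ) ^ α := Real.one_le_rpow hk hα0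
  have hterm : ∀ j, N ≤ j → j < k → r / (b * (k : ℝ) ^ α) ≤ Real.log ((r + w j) / w j) := by
    intro j hNj hjk
    have hpos : 0 < b * (j : ℝ) ^ α := by linarith [hN j hNj, hw j]
    calc r / (b * (k : ℝ) ^ α) ≤ r / (b * (j : ℝ) ^ α) := by gcongr
      _ ≤ r / (r + w j) := div_le_div_of_nonneg_left hr.le (by linarith [hw j]) (hN j hNj)
      _ ≤ Real.log ((r + w j) / w j) := div_add_le_log hr.le (hw j)
  calc r / b * (k : ℝ) ^ (1 - α) - N * r / b
      ≤ r / b * (k : ℝ) ^ (1 - α) - N * r / (b * (k : ℝ) ^ α) := by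
        gcongr
        exact le_mul_of_one_le_right hb.le hkα
    _ = ((k : ℝ) - N) * (r / (b * (k : ℝ) ^ α)) := by
        rw [Real.rpow_sub (by linarith), Real.rpow_one]
        field_simp
    _ ≤ ∑ j ∈ range k, Real.log ((r + w j) / w j) :=
        sub_mul_le_sum_range
          (fun j => Real.log_nonneg ((le_div_iff₀ (hw j)).2 (by linarith [hw j])))
          (by positivity) hterm

end WeightedProduct

lemma eventually_abs_sub_rpow_le {α : ℝ} {w v : ℕ → ℝ} (hwv : ∀ k, w k = (k : ℝ) ^ α + v k)
    (hv : v =o[atTop] fun k : ℕ => (k : ℝ) ^ α) {ε : ℝ} (hε : 0 < ε) :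
    ∀ᶠ k : ℕ in atTop, |w k - (k : ℝ) ^ α| ≤ ε * (k : ℝ) ^ α :=
  (hv.bound hε).mono fun k hk => by
    rwa [hwv, add_sub_cancel_left, ← Real.norm_eq_abs,
      ← Real.norm_of_nonneg (Real.rpow_nonneg k.cast_nonneg α)]

lemma prod_eq_exp_sum_log {ι : Type*} {s : Finset ι} {f : ι → ℝ} (hf : ∀ i ∈ s, 0 < f i) :
    ∏ i ∈ s, f i = Real.exp (∑ i ∈ s, Real.log (f i)) := by
  rw [Real.exp_sum]
  exact prod_congr rfl fun i hi => (Real.exp_log (hf i hi)).symm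

theorem statement13_general
    (α : ℝ) (hα0 : 0 < α) (hα1 : α < 1)
    (w v : ℕ → ℝ) (hw : ∀ k, 0 < w k)
    (hwv : ∀ k, w k = (k : ℝ) ^ α + v k)
    (hv : v =o[atTop] fun k : ℕ => (k : ℝ) ^ α)
    (r : ℝ) (hr : 0 < r) :
    ∃ c₁ c₂ D : ℝ, 0 < c₁ ∧ 0 < c₂ ∧ ∀ k : ℕ, 1 ≤ k →
      Real.exp (c₁ * (k : ℝ) ^ (1 - α) - D) ≤ (∏ j ∈ Finset.range k, (r + w j) / w j) ∧
      (∏ j ∈ Finset.range k, (r + w j) / w j) ≤ Real.exp (c₂ * (k : ℝ) ^ (1 - α) + D) := by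
  have hclose := eventually_abs_sub_rpow_le hwv hv (one_half_pos (α := ℝ))
  have hr_le : ∀ᶠ j : ℕ in atTop, r ≤ (j : ℝ) ^ α :=
    ((tendsto_rpow_atTop hα0).comp tendsto_natCast_atTop_atTop).eventually_ge_atTop r
  have hlo : ∀ᶠ j : ℕ in atTop, 1 / 2 * (j : ℝ) ^ α ≤ w j :=
    hclose.mono fun j hj => by linarith [(abs_le.1 hj).1]
  have hhi : ∀ᶠ j : ℕ in atTop, r + w j ≤ 3 * (j : ℝ) ^ α :=
    (hclose.and hr_le).mono fun j hj => by
      linarith [(abs_le.1 hj.1).2, Real.rpow_nonneg j.cast_nonneg α]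
  obtain ⟨C, hC⟩ := exists_sum_log_le hα0 hα1 hr hw one_half_pos hlo
  obtain ⟨D, hD⟩ := exists_le_sum_log hα0.le hr hw three_pos hhi
  refine ⟨r / 3, r / (1 / 2 * (1 - α)), max C D, by positivity,
    div_pos hr (by linarith), fun k hk => ?_⟩
  rw [prod_eq_exp_sum_log fun j _ => div_pos (by linarith [hw j]) (hw j)]
  exact ⟨Real.exp_le_exp.2 (by linarith [hD k hk, le_max_right C D]),
    Real.exp_le_exp.2 (by linarith [hC k, le_max_left C D])⟩

/-- If `w k = k^α + v k` with `0 < α < 1` and `v k = o(k^α)`, then for every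
`r > 0` there are `c₁, c₂ > 0` and `D < ∞` with
`exp (c₁ k^{1-α} - D) ≤ ∏_{j=0}^{k-1} (r + w j)/w j ≤ exp (c₂ k^{1-α} + D)` for all `k ≥ 1`. -/
theorem statement13
    (α : ℝ) (hα0 : 0 < α) (hα1 : α < 1)
    (w v : ℕ → ℝ) (hw : ∀ k, 0 < w k) (hw0 : w 0 = 1)
    (hwv : ∀ k, w k = (k : ℝ) ^ α + v k)
    (hv : v =o[atTop] fun k : ℕ => (k : ℝ) ^ α)
    (r : ℝ) (hr : 0 < r) :
    ∃ c₁ c₂ D : ℝ, 0 < c₁ ∧ 0 < c₂ ∧ ∀ k : ℕ, 1 ≤ k →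
      Real.exp (c₁ * (k : ℝ) ^ (1 - α) - D) ≤ (∏ j ∈ Finset.range k, (r + w j) / w j) ∧
      (∏ j ∈ Finset.range k, (r + w j) / w j) ≤ Real.exp (c₂ * (k : ℝ) ^ (1 - α) + D) :=
  statement13_general α hα0 hα1 w v hw hwv hv r hr
end

section
/- Let w : ℕ → (0,∞), r > 0, and f_r(k) := ∏_{j=0}^{k−1} (r + w(j))/w(j). Define g_r on [0,∞) by g_r(k²) := f_r(k) for k ∈ ℕ and piecewise linear interpolation between consecutive squares. Then: (i) for each k ≥ 1, the slope inequality (g_r(k²) − g_r((k−1)²))/(k² − (k−1)²) ≤ (g_r((k+1)²) − g_r(k²))/((k+1)² − k²) holds if and only if r ≥ ((2k+1)/(2k−1)) w(k) − w(k−1); and (ii) if additionally w(k+1) − w(k) ≤ r₀ for all k and w(k) = k + o(k), then the sequence ((2k+1)/(2k−1)) w(k) − w(k−1) = w(k) − w(k−1) + 2w(k)/(2k−1) is bounded above, so there exists a finite r for which g_r is convex on [0,∞). -/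
open Filter Asymptotics

/-- With `f_r k = ∏_{j=0}^{k-1} (r + w j)/w j` and `g_r` the piecewise linear
function with `g_r(k²) = f_r(k)`:
(i) for `k ≥ 1` the slope inequality
`(g_r(k²) - g_r((k-1)²))/(k² - (k-1)²) ≤ (g_r((k+1)²) - g_r(k²))/((k+1)² - k²)` holds iff
`r ≥ ((2k+1)/(2k-1)) w k - w (k-1)`;
(ii) if moreover the increments of `w` are bounded above and `w k = k + o(k)`, then the
sequence `((2k+1)/(2k-1)) w k - w (k-1)` is bounded above, so there is a finite `r` for which
all the slope inequalities hold, i.e. `g_r` is convex. -/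
theorem statement14
    (w : ℕ → ℝ) (hw : ∀ k, 0 < w k)
    (f : ℝ → ℕ → ℝ)
    (hf : ∀ r : ℝ, ∀ k : ℕ, f r k = ∏ j ∈ Finset.range k, (r + w j) / w j) :
    (∀ r : ℝ, 0 < r → ∀ k : ℕ, 1 ≤ k →
      ((f r k - f r (k - 1)) / ((k : ℝ) ^ 2 - ((k : ℝ) - 1) ^ 2)
          ≤ (f r (k + 1) - f r k) / (((k : ℝ) + 1) ^ 2 - (k : ℝ) ^ 2)
        ↔ ((2 * (k : ℝ) + 1) / (2 * (k : ℝ) - 1)) * w k - w (k - 1) ≤ r)) ∧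
    ((∃ r₀ : ℝ, ∀ k : ℕ, w (k + 1) - w k ≤ r₀) →
      ((fun k : ℕ => w k - (k : ℝ)) =o[atTop] fun k : ℕ => (k : ℝ)) →
      (∃ C : ℝ, ∀ k : ℕ, 1 ≤ k →
        ((2 * (k : ℝ) + 1) / (2 * (k : ℝ) - 1)) * w k - w (k - 1) ≤ C) ∧
      (∃ r : ℝ, 0 < r ∧ ∀ k : ℕ, 1 ≤ k →
        (f r k - f r (k - 1)) / ((k : ℝ) ^ 2 - ((k : ℝ) - 1) ^ 2)
          ≤ (f r (k + 1) - f r k) / (((k : ℝ) + 1) ^ 2 - (k : ℝ) ^ 2))) := by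
  have part1 : ∀ r : ℝ, 0 < r → ∀ k : ℕ, 1 ≤ k →
      ((f r k - f r (k - 1)) / ((k : ℝ) ^ 2 - ((k : ℝ) - 1) ^ 2)
          ≤ (f r (k + 1) - f r k) / (((k : ℝ) + 1) ^ 2 - (k : ℝ) ^ 2)
        ↔ ((2 * (k : ℝ) + 1) / (2 * (k : ℝ) - 1)) * w k - w (k - 1) ≤ r) := by
    intro r hr k hk
    obtain ⟨m, rfl⟩ : ∃ m, k = m + 1 := ⟨k - 1, (Nat.succ_pred_eq_of_pos hk).symm⟩
    simp only [Nat.add_sub_cancel]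
    have ha : 0 < w m := hw m
    have hb : 0 < w (m + 1) := hw (m + 1)
    have hF : 0 < f r m := by
      rw [hf]
      exact Finset.prod_pos fun j _ => div_pos (by linarith [hw j]) (hw j)
    have hfm1 : f r (m + 1) = f r m * ((r + w m) / w m) := by
      rw [hf, hf, Finset.prod_range_succ]
    have hfm2 : f r (m + 1 + 1) =
        f r m * ((r + w m) / w m) * ((r + w (m + 1)) / w (m + 1)) := by
      rw [hf, hf, Finset.prod_range_succ, Finset.prod_range_succ]
    set x := (m : ℝ) with hxdef
    have hx : 0 ≤ x := Nat.cast_nonneg m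
    have hc : ((m + 1 : ℕ) : ℝ) = x + 1 := by push_cast; ring
    rw [hc, hfm1, hfm2]
    have e1 : (x + 1) ^ 2 - (x + 1 - 1) ^ 2 = 2 * x + 1 := by ring
    have e2 : (x + 1 + 1) ^ 2 - (x + 1) ^ 2 = 2 * x + 3 := by ring
    have e3 : 2 * (x + 1) + 1 = 2 * x + 3 := by ring
    have e4 : 2 * (x + 1) - 1 = 2 * x + 1 := by ring
    rw [e1, e2, e3, e4]
    have hd1 : (0:ℝ) < 2 * x + 1 := by linarith
    have hd2 : (0:ℝ) < 2 * x + 3 := by linarith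
    rw [div_le_div_iff₀ hd1 hd2, sub_le_iff_le_add, div_mul_eq_mul_div,
      div_le_iff₀ hd1]
    have key : (f r m * ((r + w m) / w m) * ((r + w (m + 1)) / w (m + 1))
          - f r m * ((r + w m) / w m)) * (2 * x + 1)
        - (f r m * ((r + w m) / w m) - f r m) * (2 * x + 3)
        = (f r m * r / (w m * w (m + 1)))
          * ((r + w m) * (2 * x + 1) - (2 * x + 3) * w (m + 1)) := by
      field_simp
      ring
    constructor
    · intro h
      have h2 : 0 ≤ (f r m * r / (w m * w (m + 1)))
          * ((r + w m) * (2 * x + 1) - (2 * x + 3) * w (m + 1)) := by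
        rw [← key]; linarith
      have hpos : (0:ℝ) < f r m * r / (w m * w (m + 1)) := by positivity
      by_contra hcon
      push_neg at hcon
      have hneg : (f r m * r / (w m * w (m + 1)))
          * ((r + w m) * (2 * x + 1) - (2 * x + 3) * w (m + 1)) < 0 :=
        mul_neg_of_pos_of_neg hpos (by linarith)
      linarith
    · intro h
      have h3 : 0 ≤ (f r m * r / (w m * w (m + 1)))
          * ((r + w m) * (2 * x + 1) - (2 * x + 3) * w (m + 1)) :=
        mul_nonneg (by positivity) (by linarith)
      linarith [key, h3]
  refine ⟨part1, ?_⟩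
  rintro ⟨r₀, hr₀⟩ hlo
  have hev : ∀ᶠ k in atTop, ‖w k - (k:ℝ)‖ ≤ 1 * ‖(k:ℝ)‖ := hlo.def one_pos
  obtain ⟨N, hN⟩ := eventually_atTop.mp hev
  set B := (Finset.range (N + 1)).sup' ⟨0, Finset.mem_range.mpr (Nat.succ_pos N)⟩ w with hBdef
  have hB0 : 0 < B :=
    lt_of_lt_of_le (hw 0) (Finset.le_sup' w (Finset.mem_range.mpr (Nat.succ_pos N)))
  have hB : ∀ k : ℕ, w k ≤ 2 * k + B := by
    intro k
    rcases le_or_gt N k with h | h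
    · have h1 := hN k h
      rw [Real.norm_eq_abs, Real.norm_eq_abs, abs_le] at h1
      have h2 : |(k:ℝ)| = (k:ℝ) := abs_of_nonneg (Nat.cast_nonneg k)
      rw [h2] at h1
      linarith [h1.2, hB0]
    · have : w k ≤ B := Finset.le_sup' w (Finset.mem_range.mpr (by omega))
      have : (0:ℝ) ≤ (k:ℝ) := Nat.cast_nonneg k
      linarith [Finset.le_sup' w (Finset.mem_range.mpr (show k < N + 1 by omega))]
  have hC : ∀ k : ℕ, 1 ≤ k →
      ((2 * (k : ℝ) + 1) / (2 * (k : ℝ) - 1)) * w k - w (k - 1) ≤ r₀ + 4 + 2 * B := by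
    intro k hk
    obtain ⟨m, rfl⟩ : ∃ m, k = m + 1 := ⟨k - 1, (Nat.succ_pred_eq_of_pos hk).symm⟩
    simp only [Nat.add_sub_cancel]
    set x := (m : ℝ) with hxdef
    have hx : 0 ≤ x := Nat.cast_nonneg m
    have hc : ((m + 1 : ℕ) : ℝ) = x + 1 := by push_cast; ring
    rw [hc]
    have hd1 : (0:ℝ) < 2 * x + 1 := by linarith
    have expand : (2 * (x + 1) + 1) / (2 * (x + 1) - 1) * w (m + 1) - w m
        = (w (m + 1) - w m) + 2 * w (m + 1) / (2 * x + 1) := by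
      rw [show 2 * (x + 1) + 1 = 2 * x + 3 by ring, show 2 * (x + 1) - 1 = 2 * x + 1 by ring]
      field_simp
      ring
    rw [expand]
    have hwb : w (m + 1) ≤ 2 * (x + 1) + B := by
      have := hB (m + 1); rw [hc] at this; exact this
    have h1 : 2 * w (m + 1) / (2 * x + 1) ≤ 4 + 2 * B := by
      rw [div_le_iff₀ hd1]
      nlinarith [mul_nonneg hx hB0.le]
    linarith [hr₀ m]
  refine ⟨⟨r₀ + 4 + 2 * B, hC⟩, max (r₀ + 4 + 2 * B) 1, lt_of_lt_of_le one_pos (le_max_right _ _), ?_⟩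
  intro k hk
  exact (part1 _ (lt_of_lt_of_le one_pos (le_max_right _ _)) k hk).mpr
    (le_trans (hC k hk) (le_max_left _ _))
end

section
/- Let 0 < α < 1 and let w : ℕ → (0,∞) with w(0)=1 satisfy w(k) = k^α + v(k), v(k) = o(k^α), with increments bounded above. Let (θ_j)_{j≥1} be independent exponential random variables with rates w(j−1), τ_k := θ_1 + ⋯ + θ_k, and X_u := #{k ≥ 1 : τ_k < u}. Then there exists D < ∞ such that for all u ≥ 0, E[X_u] ≤ D (1+u)^{1/(1−α)} and E[X_u²] ≤ D (1+u)^{2/(1−α)}. -/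
/-!
Since `w k ≤ C (k + 1)^α`, each `θ_j` with `j ≤ n` satisfies `P(θ_j < t) ≤ C n^α t`. If
`τ_n < u`, at least half of `θ_1, …, θ_n` (which are a.s. nonnegative) lie below `2u/n`, so
independence and a union bound over the `⌈n/2⌉`-subsets give
`P(τ_n < u) ≤ 2^n (2Cu n^(α-1))^⌈n/2⌉ ≤ 2^n 8^(-n) = 4^(-n)` as soon as `n^(1-α) ≥ 128 C u`. Hence
`P(τ_n < u)` is summably small beyond `N ≍ (1+u)^(1/(1-α))`, and
`E[X_u] = Σ_k P(τ_{k+1} < u) ≤ N + 2`, `E[X_u²] ≤ Σ_k (2k+1) P(τ_{k+1} < u) ≤ N² + 6`.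
-/

open MeasureTheory ProbabilityTheory Filter Asymptotics ENNReal

lemma Nat.two_mul_add_one_le_three_mul_two_pow (k : ℕ) : 2 * k + 1 ≤ 3 * 2 ^ k := by
  induction k with
  | zero => norm_num
  | succ k ih => have := Nat.one_le_two_pow (n := k); rw [pow_succ]; omega

lemma Finset.sum_range_two_mul_add_one (n : ℕ) : ∑ k ∈ Finset.range n, (2 * k + 1) = n ^ 2 := by
  induction n with
  | zero => simp
  | succ n ih => rw [Finset.sum_range_succ, ih]; ring

-- `a k * a l ≤ a (max k l)`, and exactly `2 m + 1` pairs `(k, l)` have `max k l = m`.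
lemma ENNReal.tsum_sq_le_tsum_two_mul_add_one_mul {a : ℕ → ℝ≥0∞} (ha : ∀ k, a k ≤ 1) :
    (∑' k : ℕ, a k) ^ 2 ≤ ∑' k : ℕ, (2 * k + 1 : ℝ≥0∞) * a k := by
  have hpair : ∀ k l, a k * a l ≤ (if l ≤ k then a k else 0) + (if k < l then a l else 0) := by
    intro k l
    rcases le_or_gt l k with h | h
    · simpa [h, not_lt.2 h] using mul_le_of_le_one_right zero_le (ha l)
    · simpa [h, not_le.2 h] using mul_le_of_le_one_left zero_le (ha k)
  have hle : ∀ k, (∑' l : ℕ, if l ≤ k then a k else 0) = (k + 1 : ℝ≥0∞) * a k := by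
    intro k
    rw [tsum_eq_sum (s := Finset.range (k + 1))
        fun l hl => if_neg (by simpa [Nat.lt_succ_iff] using hl),
      Finset.sum_congr rfl fun l hl => if_pos (Nat.lt_succ_iff.1 (Finset.mem_range.1 hl))]
    simp
  have hlt : ∀ l, (∑' k : ℕ, if k < l then a l else 0) = (l : ℝ≥0∞) * a l := by
    intro l
    rw [tsum_eq_sum (s := Finset.range l) fun k hk => if_neg (by simpa using hk),
      Finset.sum_congr rfl fun k hk => if_pos (Finset.mem_range.1 hk)]
    simp
  calc (∑' k : ℕ, a k) ^ 2 = ∑' (k : ℕ) (l : ℕ), a k * a l := by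
        rw [sq, ← ENNReal.tsum_mul_right]
        simp_rw [← ENNReal.tsum_mul_left]
    _ ≤ ∑' k, ∑' l, ((if l ≤ k then a k else 0) + (if k < l then a l else 0)) :=
        ENNReal.tsum_le_tsum fun k => ENNReal.tsum_le_tsum (hpair k)
    _ = ∑' k : ℕ, (k + 1 : ℝ≥0∞) * a k + ∑' l : ℕ, (l : ℝ≥0∞) * a l := by
        simp_rw [ENNReal.tsum_add, hle]
        rw [ENNReal.tsum_comm (f := fun k l => if k < l then a l else 0)]
        simp_rw [hlt]
    _ = ∑' k : ℕ, (2 * k + 1 : ℝ≥0∞) * a k := by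
        rw [← ENNReal.tsum_add]
        congr 1 with k
        ring

lemma ENNReal.tsum_mul_le_sum_range_add {a b q : ℕ → ℝ≥0∞} {N : ℕ} (ha : ∀ k, a k ≤ 1)
    (hq : ∀ k, N ≤ k → a k ≤ q k) :
    ∑' k, b k * a k ≤ ∑ k ∈ Finset.range N, b k + ∑' k, b k * q k := by
  rw [sum_eq_tsum_indicator, ← ENNReal.tsum_add]
  refine ENNReal.tsum_le_tsum fun k => ?_
  by_cases hk : k < N
  · simpa [hk] using le_add_right (mul_le_of_le_one_right zero_le (ha k))
  · rw [Set.indicator_of_notMem (by simpa using hk), zero_add]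
    gcongr
    exact hq k (not_lt.1 hk)

lemma ENNReal.tsum_le_of_le_one_of_le_inv_four_pow {a : ℕ → ℝ≥0∞} {N : ℕ} (ha : ∀ k, a k ≤ 1)
    (htail : ∀ k, N ≤ k → a k ≤ 4⁻¹ ^ k) :
    ∑' k : ℕ, a k ≤ N + 2 ∧ ∑' k : ℕ, (2 * k + 1 : ℝ≥0∞) * a k ≤ N ^ 2 + 6 := by
  have hgeom : ∑' k : ℕ, (2 : ℝ≥0∞)⁻¹ ^ k = 2 := by
    rw [ENNReal.tsum_geometric, ENNReal.one_sub_inv_two, inv_inv]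
  constructor
  · calc ∑' k : ℕ, a k = ∑' k, 1 * a k := by simp
      _ ≤ ∑ k ∈ Finset.range N, 1 + ∑' k, 1 * (4 : ℝ≥0∞)⁻¹ ^ k :=
          ENNReal.tsum_mul_le_sum_range_add ha htail
      _ ≤ N + ∑' k : ℕ, (2 : ℝ≥0∞)⁻¹ ^ k := by
          simp only [Finset.sum_const, Finset.card_range, nsmul_eq_mul, mul_one, one_mul]
          gcongr
          norm_num
      _ = N + 2 := by rw [hgeom]
  · calc ∑' k : ℕ, (2 * k + 1 : ℝ≥0∞) * a k
        ≤ ∑ k ∈ Finset.range N, (2 * k + 1 : ℝ≥0∞) + ∑' k : ℕ, (2 * k + 1 : ℝ≥0∞) * 4⁻¹ ^ k :=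
          ENNReal.tsum_mul_le_sum_range_add ha htail
      _ ≤ N ^ 2 + ∑' k : ℕ, 3 * (2 : ℝ≥0∞)⁻¹ ^ k := by
          refine add_le_add (by exact_mod_cast (Finset.sum_range_two_mul_add_one N).le)
            (ENNReal.tsum_le_tsum fun k => ?_)
          calc (2 * k + 1 : ℝ≥0∞) * 4⁻¹ ^ k ≤ 3 * 2 ^ k * 4⁻¹ ^ k := by
                  gcongr
                  exact_mod_cast Nat.two_mul_add_one_le_three_mul_two_pow k
              _ = 3 * 2⁻¹ ^ k := by
                  rw [mul_assoc, ← mul_pow]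
                  congr 2
                  rw [show (4 : ℝ≥0∞) = 2 * 2 by norm_num, ENNReal.mul_inv (by simp) (by simp),
                    ← mul_assoc, ENNReal.mul_inv_cancel (by simp) (by simp), one_mul]
      _ = N ^ 2 + 6 := by rw [ENNReal.tsum_mul_left, hgeom]; norm_num

lemma ENNReal.two_pow_mul_sq_pow_sub_half_le {q : ℝ≥0∞} (hq : q ≤ 1) (n : ℕ) :
    2 ^ n * (q ^ 2) ^ (n - n / 2) ≤ (2 * q) ^ n := by
  rw [← pow_mul, mul_pow]
  exact mul_le_mul_right (pow_le_pow_of_le_one zero_le hq (by omega)) _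

open Finset in
lemma Finset.card_le_two_mul_card_filter_lt_of_sum_lt {ι : Type*} (s : Finset ι) {f : ι → ℝ}
    {u : ℝ} (hf : ∀ j ∈ s, 0 ≤ f j) (hsum : ∑ j ∈ s, f j < u) :
    #s ≤ 2 * #{j ∈ s | f j < 2 * u / #s} := by
  rcases s.eq_empty_or_nonempty with rfl | hs
  · simp
  have hn : (0 : ℝ) < #s := by exact_mod_cast hs.card_pos
  have hu : 0 < u := (Finset.sum_nonneg hf).trans_lt hsum
  have hsplit := Finset.card_filter_add_card_filter_not (s := s) (fun j => f j < 2 * u / #s)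
  set T := {j ∈ s | ¬ f j < 2 * u / #s}
  have hT : (#T : ℝ) * (2 * u / #s) < u := by
    calc (#T : ℝ) * (2 * u / #s) ≤ ∑ j ∈ T, f j := by
          simpa using Finset.card_nsmul_le_sum T f _ fun j hj => not_lt.1 (Finset.mem_filter.1 hj).2
      _ ≤ ∑ j ∈ s, f j :=
          Finset.sum_le_sum_of_subset_of_nonneg (Finset.filter_subset _ _) fun j hj _ => hf j hj
      _ < u := hsum
  have hT2 : 2 * #T < #s := by
    rw [mul_div_assoc', div_lt_iff₀ hn] at hT
    have : (2 * #T : ℝ) < #s := by nlinarith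
    exact_mod_cast this
  omega

lemma exists_le_mul_add_one_rpow_of_isBigO {w : ℕ → ℝ} {α : ℝ} (hα : 0 ≤ α)
    (hw : w =O[atTop] fun k : ℕ => (k : ℝ) ^ α) :
    ∃ C > 0, ∀ k : ℕ, w k ≤ C * ((k : ℝ) + 1) ^ α := by
  obtain ⟨c, hc, hcw⟩ := hw.exists_pos
  obtain ⟨k₀, hk₀⟩ := eventually_atTop.1 hcw.bound
  set C := c + ∑ k ∈ Finset.range k₀, |w k|
  have hcC : c ≤ C := le_add_of_nonneg_right (Finset.sum_nonneg fun k _ => abs_nonneg _)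
  refine ⟨C, hc.trans_le hcC, fun k => ?_⟩
  have hone : (1 : ℝ) ≤ ((k : ℝ) + 1) ^ α :=
    Real.one_le_rpow (by linarith [k.cast_nonneg (α := ℝ)]) hα
  rcases lt_or_ge k k₀ with hk | hk
  · calc w k ≤ ∑ k ∈ Finset.range k₀, |w k| :=
          (le_abs_self _).trans (Finset.single_le_sum (fun k _ => abs_nonneg (w k))
            (Finset.mem_range.2 hk))
      _ ≤ C := le_add_of_nonneg_left hc.le
      _ ≤ C * ((k : ℝ) + 1) ^ α := le_mul_of_one_le_right (hc.le.trans hcC) hone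
  · calc w k ≤ c * (k : ℝ) ^ α := by
          simpa [abs_of_nonneg (Real.rpow_nonneg k.cast_nonneg α)] using
            (le_abs_self (w k)).trans (hk₀ k hk)
      _ ≤ C * ((k : ℝ) + 1) ^ α := by gcongr; linarith

lemma le_rpow_one_sub_of_rpow_inv_le {α c u x : ℝ} (hα : α < 1) (hc : 0 ≤ c) (hu : 0 ≤ u)
    (hx : c ^ (1 / (1 - α)) * (1 + u) ^ (1 / (1 - α)) ≤ x) : c * u ≤ x ^ (1 - α) := by
  have h1α : 0 < 1 - α := by linarith
  rw [← Real.mul_rpow hc (by linarith), one_div] at hx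
  calc c * u ≤ c * (1 + u) := by gcongr; linarith
    _ = ((c * (1 + u)) ^ (1 - α)⁻¹) ^ (1 - α) :=
        (Real.rpow_inv_rpow (by positivity) h1α.ne').symm
    _ ≤ x ^ (1 - α) := by gcongr

lemma mul_two_mul_div_le_of_le_mul_add_one_rpow {α C u : ℝ} (hα : 0 ≤ α) (hC : 0 ≤ C)
    (hu : 0 ≤ u) {w : ℕ → ℝ}
    (hw : ∀ k : ℕ, w k ≤ C * ((k : ℝ) + 1) ^ α) {n j : ℕ} (hj : j ∈ Finset.Icc 1 n)
    (hn : 128 * C * u ≤ (n : ℝ) ^ (1 - α)) :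
    w (j - 1) * (2 * u / n) ≤ 1 / 64 := by
  obtain ⟨hj1, hjn⟩ := Finset.mem_Icc.1 hj
  have hn0 : (0 : ℝ) < n := by exact_mod_cast hj1.trans hjn
  have hwn : w (j - 1) ≤ C * (n : ℝ) ^ α := by
    calc w (j - 1) ≤ C * (((j - 1 : ℕ) : ℝ) + 1) ^ α := hw _
      _ = C * (j : ℝ) ^ α := by rw [Nat.cast_sub hj1]; ring_nf
      _ ≤ C * (n : ℝ) ^ α := by gcongr
  have hsplit : (n : ℝ) ^ α * (n : ℝ) ^ (1 - α) = n := by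
    rw [← Real.rpow_add hn0]; norm_num
  calc w (j - 1) * (2 * u / n) ≤ C * (n : ℝ) ^ α * (2 * u / n) := by gcongr
    _ = (n : ℝ) ^ α * (128 * C * u) / (64 * n) := by ring
    _ ≤ (n : ℝ) ^ α * (n : ℝ) ^ (1 - α) / (64 * n) := by gcongr
    _ = 1 / 64 := by rw [hsplit]; field_simp

lemma measure_lt_le_ofReal_mul_of_tail_eq_exp {Ω : Type*} [MeasurableSpace Ω] {μ : Measure Ω}
    [IsProbabilityMeasure μ] {Y : Ω → ℝ} (hY : Measurable Y) {r t : ℝ}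
    (htail : μ {ω | t < Y ω} = ENNReal.ofReal (Real.exp (-r * t))) :
    μ {ω | Y ω < t} ≤ ENNReal.ofReal (r * t) := by
  calc μ {ω | Y ω < t} ≤ μ {ω | t < Y ω}ᶜ := measure_mono fun ω (h : Y ω < t) => (not_lt.2 h.le)
    _ = 1 - ENNReal.ofReal (Real.exp (-r * t)) := by
        rw [prob_compl_eq_one_sub (measurableSet_lt measurable_const hY), htail]
    _ ≤ ENNReal.ofReal (r * t) := by
        rw [tsub_le_iff_right, ← ENNReal.ofReal_one]
        refine (ENNReal.ofReal_le_ofReal ?_).trans ENNReal.ofReal_add_le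
        linarith [Real.add_one_le_exp (-r * t)]

open Finset in
-- A sum below `u` forces some `⌈#s / 2⌉` of the (nonnegative) variables below `2 u / #s`.
lemma measure_sum_lt_le_two_pow_mul_pow {Ω ι : Type*} [MeasurableSpace Ω] {μ : Measure Ω}
    {θ : ι → Ω → ℝ} (hindep : iIndepFun θ μ) (s : Finset ι) (hnonneg : ∀ j ∈ s, 0 ≤ᵐ[μ] θ j)
    {u : ℝ} {p : ℝ≥0∞} (hp : ∀ j ∈ s, μ {ω | θ j ω < 2 * u / #s} ≤ p) :
    μ {ω | ∑ j ∈ s, θ j ω < u} ≤ 2 ^ #s * p ^ (#s - #s / 2) := by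
  set h := #s - #s / 2
  set t := 2 * u / #s
  have hcover : {ω | ∑ j ∈ s, θ j ω < u} ≤ᵐ[μ]
      (⋃ S ∈ s.powersetCard h, ⋂ j ∈ S, θ j ⁻¹' Set.Iio t : Set Ω) := by
    filter_upwards [(eventually_all_finset s).2 hnonneg] with ω hω (hlt : ∑ j ∈ s, θ j ω < u)
    have hcard : #s ≤ 2 * #{j ∈ s | θ j ω < t} := s.card_le_two_mul_card_filter_lt_of_sum_lt hω hlt
    obtain ⟨S, hS, hSh⟩ := Finset.exists_subset_card_eq (s := {j ∈ s | θ j ω < t}) (n := h)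
      (by omega)
    refine Set.mem_iUnion₂.2 ⟨S, Finset.mem_powersetCard.2 ⟨hS.trans (filter_subset _ _), hSh⟩, ?_⟩
    exact Set.mem_iInter₂.2 fun j hj => (Finset.mem_filter.1 (hS hj)).2
  calc μ {ω | ∑ j ∈ s, θ j ω < u}
      ≤ μ (⋃ S ∈ s.powersetCard h, ⋂ j ∈ S, θ j ⁻¹' Set.Iio t) := measure_mono_ae hcover
    _ ≤ ∑ S ∈ s.powersetCard h, μ (⋂ j ∈ S, θ j ⁻¹' Set.Iio t) := measure_biUnion_finset_le _ _
    _ ≤ ∑ S ∈ s.powersetCard h, p ^ h := by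
        refine Finset.sum_le_sum fun S hS => ?_
        obtain ⟨hSs, hSh⟩ := Finset.mem_powersetCard.1 hS
        rw [hindep.measure_inter_preimage_eq_mul S fun _ _ => measurableSet_Iio, ← hSh]
        exact Finset.prod_le_pow_card _ _ _ fun j hj => hp j (hSs hj)
    _ ≤ 2 ^ #s * p ^ h := by
        rw [Finset.sum_const, Finset.card_powersetCard, nsmul_eq_mul]
        gcongr
        exact_mod_cast Nat.choose_le_two_pow _ _

lemma measure_sum_exponential_lt_le_inv_four_pow {Ω : Type*} [MeasurableSpace Ω] {μ : Measure Ω}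
    [IsProbabilityMeasure μ] {θ : ℕ → Ω → ℝ} (hmeas : ∀ j, Measurable (θ j))
    (hindep : iIndepFun θ μ) {w : ℕ → ℝ}
    (hexp : ∀ j, 1 ≤ j → ∀ t : ℝ, 0 ≤ t →
      μ {ω | t < θ j ω} = ENNReal.ofReal (Real.exp (-(w (j - 1)) * t)))
    {α C u : ℝ} (hα0 : 0 ≤ α) (hα1 : α < 1) (hC : 0 ≤ C) (hu : 0 ≤ u)
    (hw : ∀ k : ℕ, w k ≤ C * ((k : ℝ) + 1) ^ α) {n : ℕ}
    (hn : (128 * C) ^ (1 / (1 - α)) * (1 + u) ^ (1 / (1 - α)) ≤ n) :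
    μ {ω | ∑ j ∈ Finset.Icc 1 n, θ j ω < u} ≤ 4⁻¹ ^ n := by
  have hn' : 128 * C * u ≤ (n : ℝ) ^ (1 - α) :=
    le_rpow_one_sub_of_rpow_inv_le hα1 (by positivity) hu hn
  have hsmall : ∀ j ∈ Finset.Icc 1 n, ∀ t, 0 ≤ t →
      μ {ω | θ j ω < t} ≤ ENNReal.ofReal (w (j - 1) * t) :=
    fun j hj t ht => measure_lt_le_ofReal_mul_of_tail_eq_exp (hmeas j)
      (hexp j (Finset.mem_Icc.1 hj).1 t ht)
  have hnonneg : ∀ j ∈ Finset.Icc 1 n, 0 ≤ᵐ[μ] θ j := fun j hj => by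
    refine ae_iff.2 (le_antisymm ?_ zero_le)
    simpa using hsmall j hj 0 le_rfl
  have hp : ∀ j ∈ Finset.Icc 1 n, μ {ω | θ j ω < 2 * u / (Finset.Icc 1 n).card} ≤ 8⁻¹ ^ 2 := by
    intro j hj
    rw [Nat.card_Icc, Nat.add_sub_cancel]
    calc μ {ω | θ j ω < 2 * u / n} ≤ ENNReal.ofReal (w (j - 1) * (2 * u / n)) :=
          hsmall j hj _ (by positivity)
      _ ≤ ENNReal.ofReal (1 / 64) :=
          ENNReal.ofReal_le_ofReal (mul_two_mul_div_le_of_le_mul_add_one_rpow hα0 hC hu hw hj hn')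
      _ = 8⁻¹ ^ 2 := by
          rw [one_div, ENNReal.ofReal_inv_of_pos (by norm_num), ← ENNReal.inv_pow]
          norm_num
  calc μ {ω | ∑ j ∈ Finset.Icc 1 n, θ j ω < u}
      ≤ 2 ^ n * (8⁻¹ ^ 2) ^ (n - n / 2) := by
        simpa using measure_sum_lt_le_two_pow_mul_pow hindep _ hnonneg hp
    _ ≤ (2 * 8⁻¹) ^ n := ENNReal.two_pow_mul_sq_pow_sub_half_le (by norm_num) n
    _ = 4⁻¹ ^ n := by
        rw [show (8 : ℝ≥0∞) = 2 * 4 by norm_num, ENNReal.mul_inv (by simp) (by simp), ← mul_assoc,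
          ENNReal.mul_inv_cancel (by simp) (by simp), one_mul]

lemma lintegral_tsum_indicator_one {Ω : Type*} [MeasurableSpace Ω] {μ : Measure Ω}
    {s : ℕ → Set Ω} (hs : ∀ k, MeasurableSet (s k)) :
    ∫⁻ ω, ∑' k, (s k).indicator 1 ω ∂μ = ∑' k, μ (s k) := by
  rw [lintegral_tsum fun k => (measurable_one.indicator (hs k)).aemeasurable]
  simp_rw [lintegral_indicator_one (hs _)]

lemma lintegral_sq_tsum_indicator_one_le {Ω : Type*} [MeasurableSpace Ω] {μ : Measure Ω}
    {s : ℕ → Set Ω} (hs : ∀ k, MeasurableSet (s k)) :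
    ∫⁻ ω, (∑' k, (s k).indicator 1 ω) ^ 2 ∂μ ≤ ∑' k : ℕ, (2 * k + 1 : ℝ≥0∞) * μ (s k) := by
  calc ∫⁻ ω, (∑' k, (s k).indicator 1 ω) ^ 2 ∂μ
      ≤ ∫⁻ ω, ∑' k : ℕ, (2 * k + 1 : ℝ≥0∞) * (s k).indicator 1 ω ∂μ :=
        lintegral_mono fun ω => ENNReal.tsum_sq_le_tsum_two_mul_add_one_mul fun k =>
          Set.indicator_le_self' (fun _ _ => zero_le) ω
    _ = ∑' k : ℕ, (2 * k + 1 : ℝ≥0∞) * μ (s k) := by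
        rw [lintegral_tsum fun k => ((measurable_one.indicator (hs k)).const_mul _).aemeasurable]
        simp_rw [lintegral_const_mul _ (measurable_one.indicator (hs _)),
          lintegral_indicator_one (hs _)]

lemma lintegral_tsum_indicator_one_le_of_le_inv_four_pow {Ω : Type*} [MeasurableSpace Ω]
    {μ : Measure Ω} [IsProbabilityMeasure μ] {s : ℕ → Set Ω} (hs : ∀ k, MeasurableSet (s k))
    {N : ℕ} (htail : ∀ k, N ≤ k → μ (s k) ≤ 4⁻¹ ^ k) :
    ∫⁻ ω, ∑' k, (s k).indicator 1 ω ∂μ ≤ N + 2 ∧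
      ∫⁻ ω, (∑' k, (s k).indicator 1 ω) ^ 2 ∂μ ≤ N ^ 2 + 6 := by
  obtain ⟨h1, h2⟩ := ENNReal.tsum_le_of_le_one_of_le_inv_four_pow (fun k => prob_le_one) htail
  exact ⟨(lintegral_tsum_indicator_one hs).trans_le h1,
    (lintegral_sq_tsum_indicator_one_le hs).trans h2⟩

lemma natCast_ceil_add_le_ofReal_mul {K y : ℝ} (hK : 0 ≤ K) (hy : 1 ≤ y) :
    (⌈K * y⌉₊ : ℝ≥0∞) + 2 ≤ ENNReal.ofReal (((K + 3) ^ 2 + 6) * y) ∧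
      (⌈K * y⌉₊ : ℝ≥0∞) ^ 2 + 6 ≤ ENNReal.ofReal (((K + 3) ^ 2 + 6) * y ^ 2) := by
  have hN : (⌈K * y⌉₊ : ℝ) ≤ (K + 1) * y := by
    linarith [Nat.ceil_lt_add_one (by positivity : 0 ≤ K * y)]
  constructor
  · rw [show (⌈K * y⌉₊ : ℝ≥0∞) + 2 = ENNReal.ofReal (⌈K * y⌉₊ + 2) by norm_cast]
    exact ENNReal.ofReal_le_ofReal (by nlinarith)
  · rw [show (⌈K * y⌉₊ : ℝ≥0∞) ^ 2 + 6 = ENNReal.ofReal (⌈K * y⌉₊ ^ 2 + 6) by norm_cast]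
    exact ENNReal.ofReal_le_ofReal (by nlinarith)

theorem statement16_general
    {Ω : Type*} [MeasureSpace Ω] [IsProbabilityMeasure (ℙ : Measure Ω)]
    (α : ℝ) (hα0 : 0 < α) (hα1 : α < 1)
    (w v : ℕ → ℝ)
    (hwv : ∀ k, w k = (k : ℝ) ^ α + v k)
    (hv : v =o[atTop] fun k : ℕ => (k : ℝ) ^ α)
    (θ : ℕ → Ω → ℝ) (hmeas : ∀ j, Measurable (θ j))
    (hindep : iIndepFun θ ℙ)
    (hexp : ∀ j, 1 ≤ j → ∀ t : ℝ, 0 ≤ t →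
      ℙ {ω | t < θ j ω} = ENNReal.ofReal (Real.exp (-(w (j - 1)) * t)))
    (τ : ℕ → Ω → ℝ) (hτ : ∀ k ω, τ k ω = ∑ j ∈ Finset.Icc 1 k, θ j ω)
    (X : ℝ → Ω → ℝ≥0∞)
    (hX : ∀ u ω, X u ω = ∑' k : ℕ, if τ (k + 1) ω < u then (1 : ℝ≥0∞) else 0) :
    ∃ D : ℝ, 0 < D ∧ ∀ u : ℝ, 0 ≤ u →
      (∫⁻ ω, X u ω ∂ℙ) ≤ ENNReal.ofReal (D * (1 + u) ^ (1 / (1 - α))) ∧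
      (∫⁻ ω, (X u ω) ^ 2 ∂ℙ) ≤ ENNReal.ofReal (D * (1 + u) ^ (2 / (1 - α))) := by
  have hwO : w =O[atTop] fun k : ℕ => (k : ℝ) ^ α := by
    rw [show w = fun k : ℕ => (k : ℝ) ^ α + v k from funext hwv]
    exact (isBigO_refl _ _).add hv.isBigO
  obtain ⟨C, hC, hwC⟩ := exists_le_mul_add_one_rpow_of_isBigO hα0.le hwO
  set K := (128 * C) ^ (1 / (1 - α))
  have hK : 0 ≤ K := by positivity
  refine ⟨(K + 3) ^ 2 + 6, by positivity, fun u hu => ?_⟩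
  set y := (1 + u) ^ (1 / (1 - α))
  have hy : 1 ≤ y := Real.one_le_rpow (by linarith) (by bound)
  set s : ℕ → Set Ω := fun k => {ω | τ (k + 1) ω < u}
  have hs : ∀ k, MeasurableSet (s k) := fun k => by
    simp only [s, hτ]
    exact measurableSet_lt (Finset.measurable_sum _ fun j _ => hmeas j) measurable_const
  have htail : ∀ k, ⌈K * y⌉₊ ≤ k → ℙ (s k) ≤ 4⁻¹ ^ k := fun k hk => by
    simp only [s, hτ]
    exact (measure_sum_exponential_lt_le_inv_four_pow hmeas hindep hexp hα0.le hα1 hC.le hu hwC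
      ((Nat.le_ceil _).trans (by exact_mod_cast hk.trans k.le_succ))).trans
      (pow_le_pow_of_le_one zero_le (by norm_num) k.le_succ)
  have hXs : X u = fun ω => ∑' k, (s k).indicator 1 ω := by
    funext ω
    simp [hX, s, Set.indicator_apply]
  have hy2 : (1 + u) ^ (2 / (1 - α)) = y ^ 2 := by
    rw [← Real.rpow_two, ← Real.rpow_mul (by linarith)]
    ring_nf
  obtain ⟨h1, h2⟩ := lintegral_tsum_indicator_one_le_of_le_inv_four_pow hs htail
  obtain ⟨hD1, hD2⟩ := natCast_ceil_add_le_ofReal_mul hK hy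
  rw [hXs, hy2]
  exact ⟨h1.trans hD1, h2.trans hD2⟩

/-- Under hypothesis (b) (`w k = k^α + v k`, `0 < α < 1`, `v = o(k^α)`) with
bounded increments, for `X_u = #{k ≥ 1 : τ_k < u}` there is `D < ∞` with
`E[X_u] ≤ D (1+u)^{1/(1-α)}` and `E[X_u²] ≤ D (1+u)^{2/(1-α)}` for all `u ≥ 0`. -/
theorem statement16
    {Ω : Type*} [MeasureSpace Ω] [IsProbabilityMeasure (ℙ : Measure Ω)]
    (α : ℝ) (hα0 : 0 < α) (hα1 : α < 1)
    (w v : ℕ → ℝ) (hw : ∀ k, 0 < w k) (hw0 : w 0 = 1)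
    (hwv : ∀ k, w k = (k : ℝ) ^ α + v k)
    (hv : v =o[atTop] fun k : ℕ => (k : ℝ) ^ α)
    (r₀ : ℝ) (hincr : ∀ k : ℕ, w (k + 1) - w k ≤ r₀)
    (θ : ℕ → Ω → ℝ) (hmeas : ∀ j, Measurable (θ j))
    (hindep : iIndepFun θ ℙ)
    (hexp : ∀ j, 1 ≤ j → ∀ t : ℝ, 0 ≤ t →
      ℙ {ω | t < θ j ω} = ENNReal.ofReal (Real.exp (-(w (j - 1)) * t)))
    (τ : ℕ → Ω → ℝ) (hτ : ∀ k ω, τ k ω = ∑ j ∈ Finset.Icc 1 k, θ j ω)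
    (X : ℝ → Ω → ℝ≥0∞)
    (hX : ∀ u ω, X u ω = ∑' k : ℕ, if τ (k + 1) ω < u then (1 : ℝ≥0∞) else 0) :
    ∃ D : ℝ, 0 < D ∧ ∀ u : ℝ, 0 ≤ u →
      (∫⁻ ω, X u ω ∂ℙ) ≤ ENNReal.ofReal (D * (1 + u) ^ (1 / (1 - α))) ∧
      (∫⁻ ω, (X u ω) ^ 2 ∂ℙ) ≤ ENNReal.ofReal (D * (1 + u) ^ (2 / (1 - α))) :=
  statement16_general α hα0 hα1 w v hwv hv θ hmeas hindep hexp τ hτ X hX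
end
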